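/- arXiv:2409.07636 — 3 statements merged into one kernel-verified Lean document; each statement's English description precedes it below -/
import Mathlib

section
/- Let a/b and c/d be Farey neighbors with 0 < a/b < c/d ≤ 1, and let p/q be a reduced fraction with a/b < p/q < c/d. Then: (1) there exist an integer k ≥ 2 and ζ_1, …, ζ_k ∈ {a/b, c/d} with ζ_1 = c/d and ζ_k = a/b such that W^{01}_{p/q} equals the concatenation W^{01}_{ζ_1}⋯W^{01}_{ζ_k}; (2) for this decomposition, for each 1 < j ≤ k there exists an integer 0 ≤ r ≤ k−j such that ζ_{1+i} = ζ_{j+i} for all 0 ≤ i < r, ζ_{1+r} = c/d, and ζ_{j+r} = a/b; (3) for each 1 < j ≤ k, the finite word W^{01}_{ζ_j}⋯W^{01}_{ζ_k} is strictly smaller, in the lexicographic order on binary words (with 0 < 1), than the prefix of the same length of W^{01}_{ζ_1}⋯W^{01}_{ζ_k}. -/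
/-- The 01-mechanical digit sequence of `r`: `α_j(r) = ⌈(j+1)r⌉ - ⌈jr⌉`. -/
noncomputable def alpha01 (r : ℚ) (j : ℕ) : ℤ := ⌈((j : ℚ) + 1) * r⌉ - ⌈(j : ℚ) * r⌉

/-- The 10-mechanical digit sequence of `r`: `β_j(r) = ⌊(j+1)r⌋ - ⌊jr⌋`. -/
noncomputable def beta10 (r : ℚ) (j : ℕ) : ℤ := ⌊((j : ℚ) + 1) * r⌋ - ⌊(j : ℚ) * r⌋

/-- The 01-word of `r` of length `q`: `(α_1(r), …, α_q(r))`. -/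
noncomputable def word01 (r : ℚ) (q : ℕ) : List ℤ := (List.range q).map fun i => alpha01 r (i + 1)

/-- The 10-word of `r` of length `q`: `(β_1(r), …, β_q(r))`. -/
noncomputable def word10 (r : ℚ) (q : ℕ) : List ℤ := (List.range q).map fun i => beta10 r (i + 1)

/-- The list of 01-words `W^{01}_{ζ_1}, …, W^{01}_{ζ_k}` of the fractions
`ζ_i = (ζ i).1 / (ζ i).2`. -/
noncomputable def wordsOf (ζ : ℕ → ℕ × ℕ) (k : ℕ) : List (List ℤ) :=
  (List.range k).map fun i => word01 (((ζ (i + 1)).1 : ℚ) / ((ζ (i + 1)).2 : ℚ)) (ζ (i + 1)).2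


private lemma ceil_div_eq {X Y : ℕ} (hY : 0 < Y) {E : ℤ}
    (h1 : (X:ℤ) ≤ E * Y) (h2 : E * Y < X + Y) : ⌈(X : ℚ)/(Y:ℚ)⌉ = E := by
  have hY' : (0:ℚ) < (Y:ℚ) := by exact_mod_cast hY
  rw [Int.ceil_eq_iff]
  constructor
  · rw [lt_div_iff₀ hY']
    have h2' : ((E:ℚ) * Y) < (X:ℚ) + Y := by exact_mod_cast h2
    push_cast
    linarith
  · rw [div_le_iff₀ hY']
    exact_mod_cast h1

private lemma ceil_div_bounds {X Y : ℕ} (hY : 0 < Y) :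
    (X:ℤ) ≤ ⌈(X : ℚ)/(Y:ℚ)⌉ * Y ∧ ⌈(X : ℚ)/(Y:ℚ)⌉ * Y < X + Y := by
  have hY' : (0:ℚ) < (Y:ℚ) := by exact_mod_cast hY
  constructor
  · have := Int.le_ceil ((X:ℚ)/(Y:ℚ))
    rw [div_le_iff₀ hY'] at this
    exact_mod_cast this
  · have h0 := Int.ceil_lt_add_one ((X:ℚ)/(Y:ℚ))
    have h2 : (⌈(X : ℚ)/(Y:ℚ)⌉ : ℚ) * Y < X + Y := by
      have hXY : ((X:ℚ)/Y)*Y = X := by field_simp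
      nlinarith [h0, hY']
    exact_mod_cast h2

private lemma alpha_cast (x y N : ℕ) :
    alpha01 ((x:ℚ)/(y:ℚ)) N = ⌈(((N+1)*x : ℕ):ℚ)/(y:ℚ)⌉ - ⌈((N*x:ℕ):ℚ)/(y:ℚ)⌉ := by
  unfold alpha01
  congr 2
  · push_cast; ring
  · push_cast; ring

private lemma sum_alpha (r : ℚ) (s t : ℕ) :
    ∑ i ∈ Finset.range t, alpha01 r (s + i) = ⌈((s + t : ℕ):ℚ) * r⌉ - ⌈((s:ℕ):ℚ) * r⌉ := by
  induction t with
  | zero => simp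
  | succ t ih =>
      rw [Finset.sum_range_succ, ih]
      unfold alpha01
      have e1 : ((s + (t+1) : ℕ) : ℚ) = ((s + t : ℕ) : ℚ) + 1 := by push_cast; ring
      have e2 : (((s + t : ℕ) : ℚ)) = ((s : ℚ) + (t:ℚ)) := by push_cast; ring
      rw [e1, e2]
      push_cast
      ring

private lemma sum_alpha0 (r : ℚ) (t : ℕ) :
    ∑ i ∈ Finset.range t, alpha01 r i = ⌈((t : ℕ):ℚ) * r⌉ := by
  have h := sum_alpha r 0 t
  simp only [Nat.zero_add, Nat.cast_zero, zero_mul, Int.ceil_zero, sub_zero] at h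
  rw [← h]

private lemma alpha_mem {r : ℚ} (h0 : 0 ≤ r) (h1 : r ≤ 1) (j : ℕ) :
    alpha01 r j = 0 ∨ alpha01 r j = 1 := by
  unfold alpha01
  have l1 : ⌈(j:ℚ)*r⌉ ≤ ⌈((j:ℚ)+1)*r⌉ := Int.ceil_mono (by nlinarith)
  have l2 : ⌈((j:ℚ)+1)*r⌉ ≤ ⌈(j:ℚ)*r⌉ + 1 := by
    calc ⌈((j:ℚ)+1)*r⌉ ≤ ⌈(j:ℚ)*r + 1⌉ := Int.ceil_mono (by nlinarith)
      _ = ⌈(j:ℚ)*r⌉ + 1 := Int.ceil_add_one _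
  omega

private lemma ceil_subadd (x y : ℚ) : ⌈x + y⌉ ≤ ⌈x⌉ + ⌈y⌉ := by
  apply Int.ceil_le.mpr
  push_cast
  have hx := Int.le_ceil x
  have hy := Int.le_ceil y
  linarith

private lemma firstdiff (f g : ℕ → ℤ) (T : ℕ)
    (hf : ∀ i, f i = 0 ∨ f i = 1) (hg : ∀ i, g i = 0 ∨ g i = 1)
    (H : ∀ t, t ≤ T → ∑ i ∈ Finset.range t, g i ≤ ∑ i ∈ Finset.range t, f i)
    (HS : ∑ i ∈ Finset.range T, g i < ∑ i ∈ Finset.range T, f i) :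
    ∃ t, t < T ∧ (∀ i, i < t → f i = g i) ∧ f t = 1 ∧ g t = 0 := by
  have hT : 0 < T := by
    rcases Nat.eq_zero_or_pos T with h | h
    · subst h; simp at HS
    · exact h
  have hex : ∃ t, ∑ i ∈ Finset.range (t+1), g i < ∑ i ∈ Finset.range (t+1), f i := by
    refine ⟨T - 1, ?_⟩
    have : T - 1 + 1 = T := by omega
    rw [this]; exact HS
  classical
  set t := Nat.find hex with htdef
  have ht : ∑ i ∈ Finset.range (t+1), g i < ∑ i ∈ Finset.range (t+1), f i := Nat.find_spec hex
  have htle : t ≤ T - 1 := Nat.find_le (by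
    have : T - 1 + 1 = T := by omega
    rw [this]; exact HS)
  have htT : t < T := by omega
  have heq : ∀ s, s ≤ t → ∑ i ∈ Finset.range s, f i = ∑ i ∈ Finset.range s, g i := by
    intro s hs
    rcases Nat.eq_zero_or_pos s with h | h
    · subst h; simp
    · have hs' : s - 1 < t := by omega
      have hnot := Nat.find_min hex hs'
      have : s - 1 + 1 = s := by omega
      rw [this] at hnot
      have hge := H s (by omega)
      omega
  refine ⟨t, htT, ?_, ?_⟩
  · intro i hi
    have e1 := heq i (by omega)
    have e2 := heq (i+1) (by omega)
    rw [Finset.sum_range_succ, Finset.sum_range_succ] at e2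
    omega
  · have e1 := heq t le_rfl
    rw [Finset.sum_range_succ, Finset.sum_range_succ] at ht
    rcases hf t with h | h <;> rcases hg t with h' | h' <;> omega

private lemma lex_of_firstdiff : ∀ (t : ℕ) (f g : ℕ → ℤ) (T : ℕ), t < T →
    (∀ i, i < t → f i = g i) → f t < g t →
    List.Lex (· < ·) ((List.range T).map f) ((List.range T).map g) := by
  intro t
  induction t with
  | zero =>
    intro f g T hT hagree hlt
    obtain ⟨T', rfl⟩ : ∃ T', T = T' + 1 := ⟨T - 1, by omega⟩
    rw [List.range_succ_eq_map]
    simp only [List.map_cons, List.map_map]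
    exact List.Lex.rel hlt
  | succ t ih =>
    intro f g T hT hagree hlt
    obtain ⟨T', rfl⟩ : ∃ T', T = T' + 1 := ⟨T - 1, by omega⟩
    rw [List.range_succ_eq_map]
    simp only [List.map_cons, List.map_map]
    rw [hagree 0 (by omega)]
    exact List.Lex.cons (ih (f ∘ Nat.succ) (g ∘ Nat.succ) T' (by omega)
      (fun i hi => hagree (i+1) (by omega)) hlt)

private lemma ceil_compl {x y P : ℕ} (hcop : Nat.Coprime x y) (hy : 0 < y)
    (hP0 : 0 < P) (hPy : P < y) :
    ⌈((P*x : ℕ):ℚ)/(y:ℚ)⌉ + ⌈(((y-P)*x : ℕ):ℚ)/(y:ℚ)⌉ = x + 1 := by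
  obtain ⟨hb1, hb2⟩ := ceil_div_bounds (X := P*x) hy
  set C := ⌈((P*x : ℕ):ℚ)/(y:ℚ)⌉ with hC
  have hne : (P*x : ℤ) ≠ C * y := by
    intro h
    have hdvd : (y:ℤ) ∣ (P:ℤ) * x := ⟨C, by push_cast at h ⊢; linarith⟩
    have hdvd' : y ∣ P * x := by exact_mod_cast hdvd
    have := hcop.symm.dvd_of_dvd_mul_right hdvd'
    have := Nat.le_of_dvd hP0 this
    omega
  have hlt : (P*x : ℤ) < C * y := by
    push_cast at hb1 hne ⊢
    rcases lt_or_eq_of_le hb1 with h | h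
    · exact h
    · exact absurd h hne
  have h2 : ⌈(((y-P)*x : ℕ):ℚ)/(y:ℚ)⌉ = (x:ℤ) + 1 - C := by
    apply ceil_div_eq hy
    · have e : (((y-P)*x : ℕ) : ℤ) = ((y:ℤ) - P)*x := by
        push_cast [Nat.cast_sub (le_of_lt hPy)]; ring
      rw [e]
      push_cast at hb2 ⊢
      nlinarith
    · have e : (((y-P)*x : ℕ) : ℤ) = ((y:ℤ) - P)*x := by
        push_cast [Nat.cast_sub (le_of_lt hPy)]; ring
      rw [e]
      push_cast at hlt ⊢
      nlinarith
  rw [h2]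
  ring

private noncomputable def segA (r : ℚ) (s t : ℕ) : List ℤ := (List.range t).map fun i => alpha01 r (s + i + 1)

private lemma segA_append (r : ℚ) (s t₁ t₂ : ℕ) :
    segA r s (t₁ + t₂) = segA r s t₁ ++ segA r (s + t₁) t₂ := by
  unfold segA
  rw [List.range_add, List.map_append, List.map_map]
  congr 1
  apply List.map_congr_left
  intro i _
  show alpha01 r (s + (t₁ + i) + 1) = alpha01 r (s + t₁ + i + 1)
  exact congrArg (alpha01 r) (by omega)

private lemma word01_eq_segA (r : ℚ) (t : ℕ) : word01 r t = segA r 0 t := by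
  unfold word01 segA
  apply List.map_congr_left
  intro i _
  exact congrArg (alpha01 r) (by omega)


private lemma ceil_c_case {a b c d p q m n : ℕ} (PP QQ : ℕ) (u : ℤ)
    (hq : 0 < q) (hd : 0 < d) (hb2 : 2 ≤ b) (hm0 : 0 < m) (hn0 : 0 < n)
    (hFz : (b:ℤ) * c = a * d + 1) (hqz : (q:ℤ) = m * b + n * d)
    (hkey : ∀ (i : ℕ) (C : ℤ), ((PP:ℤ) + i) * p
      = ((QQ:ℤ) + C) * q - u - (m:ℤ) * (C * b - (i:ℤ) * a) - (n:ℤ) * (C * d - (i:ℤ) * c))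
    (hu0 : 0 ≤ u) (hu1 : u ≤ (n:ℤ) - 1) (i : ℕ) (hi : i ≤ d + 1) :
    ⌈(((PP + i) * p : ℕ) : ℚ) / (q:ℚ)⌉ = (QQ : ℤ) + ⌈((i * c : ℕ) : ℚ) / (d:ℚ)⌉ := by
  obtain ⟨hv1, hv2⟩ := ceil_div_bounds (X := i*c) hd
  set C := ⌈((i * c : ℕ):ℚ)/(d:ℚ)⌉ with hCdef
  have hv1' : ((i:ℤ) * c) ≤ C * d := by exact_mod_cast hv1
  have hv2' : C * d < (i:ℤ) * c + d := by exact_mod_cast hv2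
  have hdz : (0:ℤ) < (d:ℤ) := by exact_mod_cast hd
  have hbz2 : (2:ℤ) ≤ (b:ℤ) := by exact_mod_cast hb2
  have hmz0 : (1:ℤ) ≤ (m:ℤ) := by exact_mod_cast hm0
  have hnz0 : (1:ℤ) ≤ (n:ℤ) := by exact_mod_cast hn0
  have hiz : (i:ℤ) ≤ (d:ℤ) + 1 := by exact_mod_cast hi
  have hi0 : (0:ℤ) ≤ (i:ℤ) := by positivity
  have hvv0 : (0:ℤ) ≤ C * d - (i:ℤ) * c := by linarith
  have hvvd : C * d - (i:ℤ) * c ≤ (d:ℤ) - 1 := by linarith [Int.add_one_le_iff.mpr hv2']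
  have hdg : (d:ℤ) * (C * b - (i:ℤ) * a) = (b:ℤ) * (C * d - (i:ℤ) * c) + i := by
    linear_combination (i:ℤ) * hFz
  have hg0 : (0:ℤ) ≤ C * b - (i:ℤ) * a := by
    by_contra hneg
    push_neg at hneg
    have h6 : (d:ℤ) * (C * b - (i:ℤ) * a) < 0 := mul_neg_of_pos_of_neg hdz hneg
    have h7 : (0:ℤ) ≤ (b:ℤ) * (C * d - (i:ℤ) * c) := mul_nonneg (by linarith) hvv0
    linarith [hdg]
  have hgb : C * b - (i:ℤ) * a ≤ (b:ℤ) := by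
    have h8 : (b:ℤ) * (C * d - (i:ℤ) * c) ≤ (b:ℤ) * ((d:ℤ) - 1) :=
      mul_le_mul_of_nonneg_left hvvd (by linarith)
    have h7 : (d:ℤ) * (C * b - (i:ℤ) * a) < (d:ℤ) * ((b:ℤ) + 1) := by
      rw [hdg]
      have e : (b:ℤ) * ((d:ℤ) - 1) = (b:ℤ) * d - b := by ring
      have e' : (d:ℤ) * ((b:ℤ) + 1) = (b:ℤ) * d + d := by ring
      linarith
    have := lt_of_mul_lt_mul_left h7 (by linarith : (0:ℤ) ≤ (d:ℤ))
    linarith [Int.add_one_le_iff.mpr this]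
  have hkey' := hkey i C
  apply ceil_div_eq hq (E := (QQ : ℤ) + C)
  · have t1 : (0:ℤ) ≤ (m:ℤ) * (C * b - (i:ℤ) * a) := mul_nonneg (by linarith) hg0
    have t2 : (0:ℤ) ≤ (n:ℤ) * (C * d - (i:ℤ) * c) := mul_nonneg (by linarith) hvv0
    calc (((PP + i) * p : ℕ) : ℤ) = ((PP : ℤ) + i) * p := by push_cast; ring
      _ ≤ ((QQ : ℤ) + C) * q := by rw [hkey']; linarith
  · have t3 : (m:ℤ) * (C * b - (i:ℤ) * a) ≤ (m:ℤ) * b := mul_le_mul_of_nonneg_left hgb (by linarith)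
    have t4 : (n:ℤ) * (C * d - (i:ℤ) * c) ≤ (n:ℤ) * ((d:ℤ) - 1) :=
      mul_le_mul_of_nonneg_left hvvd (by linarith)
    have e : (((PP + i) * p : ℕ) : ℤ) = ((PP : ℤ) + i) * p := by push_cast; ring
    rw [e, hkey']
    have e2 : (n:ℤ) * ((d:ℤ) - 1) = (n:ℤ) * d - n := by ring
    linarith

private lemma ceil_a_case {a b c d p q m n : ℕ} (PP QQ : ℕ) (u : ℤ)
    (hq : 0 < q) (hd : 0 < d) (hb2 : 2 ≤ b) (hm0 : 0 < m) (hn0 : 0 < n)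
    (hFz : (b:ℤ) * c = a * d + 1) (hqz : (q:ℤ) = m * b + n * d)
    (hkey : ∀ (i : ℕ) (C : ℤ), ((PP:ℤ) + i) * p
      = ((QQ:ℤ) + C) * q - u - (m:ℤ) * (C * b - (i:ℤ) * a) - (n:ℤ) * (C * d - (i:ℤ) * c))
    (hu0 : (n:ℤ) ≤ u) (hu1 : u ≤ (m:ℤ) + n - 1) (i : ℕ) (hi : i ≤ b + 1) :
    ⌈(((PP + i) * p : ℕ) : ℚ) / (q:ℚ)⌉ = (QQ : ℤ) + ⌈((i * a : ℕ) : ℚ) / (b:ℚ)⌉ := by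
  have hb0 : 0 < b := by omega
  obtain ⟨hv1, hv2⟩ := ceil_div_bounds (X := i*a) hb0
  set C := ⌈((i * a : ℕ):ℚ)/(b:ℚ)⌉ with hCdef
  have hv1' : ((i:ℤ) * a) ≤ C * b := by exact_mod_cast hv1
  have hv2' : C * b < (i:ℤ) * a + b := by exact_mod_cast hv2
  have hdz : (0:ℤ) < (d:ℤ) := by exact_mod_cast hd
  have hbz2 : (2:ℤ) ≤ (b:ℤ) := by exact_mod_cast hb2
  have hmz0 : (1:ℤ) ≤ (m:ℤ) := by exact_mod_cast hm0
  have hnz0 : (1:ℤ) ≤ (n:ℤ) := by exact_mod_cast hn0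
  have hiz : (i:ℤ) ≤ (b:ℤ) + 1 := by exact_mod_cast hi
  have hi0 : (0:ℤ) ≤ (i:ℤ) := by positivity
  have hw0 : (0:ℤ) ≤ C * b - (i:ℤ) * a := by linarith
  have hwb : C * b - (i:ℤ) * a ≤ (b:ℤ) - 1 := by linarith [Int.add_one_le_iff.mpr hv2']
  have hbh : (b:ℤ) * ((i:ℤ) * c - C * d) = (i:ℤ) - (C * b - (i:ℤ) * a) * d := by
    linear_combination (i:ℤ) * hFz
  have hwd0 : (0:ℤ) ≤ (C * b - (i:ℤ) * a) * d := mul_nonneg hw0 (by linarith)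
  have hh1 : (i:ℤ) * c - C * d ≤ 1 := by
    have h7 : (b:ℤ) * ((i:ℤ) * c - C * d) < (b:ℤ) * 2 := by
      rw [hbh]; linarith
    have := lt_of_mul_lt_mul_left h7 (by linarith : (0:ℤ) ≤ (b:ℤ))
    linarith [Int.add_one_le_iff.mpr this]
  have hh2 : (1:ℤ) - d ≤ (i:ℤ) * c - C * d := by
    have hwd1 : (C * b - (i:ℤ) * a) * d ≤ ((b:ℤ) - 1) * d :=
      mul_le_mul_of_nonneg_right hwb (by linarith)
    have h8 : (b:ℤ) * (-(d:ℤ)) < (b:ℤ) * ((i:ℤ) * c - C * d) := by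
      rw [hbh]
      have e : ((b:ℤ) - 1) * d = (b:ℤ) * d - d := by ring
      have e2 : (b:ℤ) * (-(d:ℤ)) = -((b:ℤ) * d) := by ring
      linarith
    have := lt_of_mul_lt_mul_left h8 (by linarith : (0:ℤ) ≤ (b:ℤ))
    linarith [Int.add_one_le_iff.mpr this]
  have hkey' := hkey i C
  apply ceil_div_eq hq (E := (QQ : ℤ) + C)
  · have t1 : (0:ℤ) ≤ (m:ℤ) * (C * b - (i:ℤ) * a) := mul_nonneg (by linarith) hw0
    have t2 : (n:ℤ) * ((i:ℤ) * c - C * d) ≤ (n:ℤ) * 1 :=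
      mul_le_mul_of_nonneg_left hh1 (by linarith)
    have e3 : (n:ℤ) * (C * d - (i:ℤ) * c) = -((n:ℤ) * ((i:ℤ) * c - C * d)) := by ring
    calc (((PP + i) * p : ℕ) : ℤ) = ((PP : ℤ) + i) * p := by push_cast; ring
      _ ≤ ((QQ : ℤ) + C) * q := by rw [hkey']; linarith
  · have t3 : (m:ℤ) * (C * b - (i:ℤ) * a) ≤ (m:ℤ) * ((b:ℤ) - 1) :=
      mul_le_mul_of_nonneg_left hwb (by linarith)
    have t4 : (n:ℤ) * ((1:ℤ) - d) ≤ (n:ℤ) * ((i:ℤ) * c - C * d) :=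
      mul_le_mul_of_nonneg_left hh2 (by linarith)
    have e : (((PP + i) * p : ℕ) : ℤ) = ((PP : ℤ) + i) * p := by push_cast; ring
    rw [e, hkey']
    have e2 : (m:ℤ) * ((b:ℤ) - 1) = (m:ℤ) * b - m := by ring
    have e3 : (n:ℤ) * ((1:ℤ) - d) = (n:ℤ) - (n:ℤ) * d := by ring
    have e4 : (n:ℤ) * (C * d - (i:ℤ) * c) = -((n:ℤ) * ((i:ℤ) * c - C * d)) := by ring
    linarith


set_option maxHeartbeats 4000000 in
/-- for Farey neighbors `0 < a/b < c/d ≤ 1` and `a/b < p/q < c/d`,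
`W^{01}_{p/q}` decomposes as `W^{01}_{ζ_1}⋯W^{01}_{ζ_k}` with `k ≥ 2`, `ζ_1 = c/d`,
`ζ_k = a/b`, each `ζ_i ∈ {a/b, c/d}`; moreover (2) each shifted decomposition first
differs from the initial one by a `c/d` above an `a/b`, and (3) each proper wordwise
suffix is lexicographically smaller than the prefix of the same length. -/
theorem word_decomposition_shift_comparison
    (a b c d p q : ℕ) (ha : 0 < a) (hb : 0 < b) (hd : 0 < d) (hq : 0 < q) (hcd : c ≤ d)
    (hpq : Nat.Coprime p q)
    (hFarey : b * c = a * d + 1)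
    (h1 : (a : ℚ) / b < (p : ℚ) / q) (h2 : (p : ℚ) / q < (c : ℚ) / d) :
    ∃ (k : ℕ) (ζ : ℕ → ℕ × ℕ), 2 ≤ k ∧
      (∀ i, 1 ≤ i → i ≤ k → ζ i = (a, b) ∨ ζ i = (c, d)) ∧
      ζ 1 = (c, d) ∧ ζ k = (a, b) ∧
      word01 ((p : ℚ) / q) q = (wordsOf ζ k).flatten ∧
      (∀ j, 1 < j → j ≤ k → ∃ r : ℕ, r ≤ k - j ∧
        (∀ i : ℕ, i < r → ζ (1 + i) = ζ (j + i)) ∧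
        ζ (1 + r) = (c, d) ∧ ζ (j + r) = (a, b)) ∧
      (∀ j, 1 < j → j ≤ k →
        List.Lex (· < ·)
          ((wordsOf ζ k).drop (j - 1)).flatten
          (((wordsOf ζ k).flatten).take ((wordsOf ζ k).drop (j - 1)).flatten.length)) := by
  have hq' : (0:ℚ) < q := by positivity
  have hb' : (0:ℚ) < b := by positivity
  have hd' : (0:ℚ) < d := by positivity
  have haq : a * q < p * b := by exact_mod_cast (div_lt_div_iff₀ hb' hq').mp h1
  have hdp : p * d < c * q := by exact_mod_cast (div_lt_div_iff₀ hq' hd').mp h2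
  have hp0 : 0 < p := by
    rcases Nat.eq_zero_or_pos p with h | h
    · subst h; simp at haq
    · exact h
  have hc0 : 0 < c := by
    rcases Nat.eq_zero_or_pos c with h | h
    · subst h; simp at hdp
    · exact h
  have hpltq : p < q := by
    have h3 : c * q ≤ d * q := Nat.mul_le_mul_right _ hcd
    have : p * d < q * d := by
      calc p * d < c * q := hdp
        _ ≤ d * q := h3
        _ = q * d := by ring
    exact Nat.lt_of_mul_lt_mul_right this
  have hab : a < b := by
    have : a * d < b * d := by
      calc a * d < b * c := by omega
        _ ≤ b * d := Nat.mul_le_mul_left _ hcd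
    exact Nat.lt_of_mul_lt_mul_right this
  have hb2 : 2 ≤ b := by omega
  -- m and n
  set m := c * q - p * d with hmdef
  set n := p * b - a * q with hndef
  have hm : p * d + m = c * q := Nat.add_sub_cancel' (le_of_lt hdp)
  have hn : a * q + n = p * b := Nat.add_sub_cancel' (le_of_lt haq)
  have hm0 : 0 < m := Nat.sub_pos_of_lt hdp
  have hn0 : 0 < n := Nat.sub_pos_of_lt haq
  set k := m + n with hkdef
  have hk2 : 2 ≤ k := by omega
  have hk0 : 0 < k := by omega
  have hmz : (p:ℤ) * d + m = c * q := by exact_mod_cast hm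
  have hnz : (a:ℤ) * q + n = p * b := by exact_mod_cast hn
  have hFz : (b:ℤ) * c = a * d + 1 := by exact_mod_cast hFarey
  have hqz : (q:ℤ) = m * b + n * d := by linear_combination (-(b:ℤ)) * hmz - (d:ℤ) * hnz - (q:ℤ) * hFz
  have hpz : (p:ℤ) = m * a + n * c := by linear_combination (-(a:ℤ)) * hmz - (c:ℤ) * hnz - (p:ℤ) * hFz
  have hkz : (k:ℤ) = m + n := by push_cast [hkdef]; ring
  have hqmn : q = m * b + n * d := by exact_mod_cast hqz
  have hpmn : p = m * a + n * c := by exact_mod_cast hpz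
  have hnk : Nat.Coprime n k := by
    have hg1 : Nat.gcd n k ∣ n := Nat.gcd_dvd_left _ _
    have hg2 : Nat.gcd n k ∣ k := Nat.gcd_dvd_right _ _
    have hg3 : Nat.gcd n k ∣ m := by
      have : m = k - n := by omega
      rw [this]; exact Nat.dvd_sub hg2 hg1
    have hgq : Nat.gcd n k ∣ q := by rw [hqmn]; exact Nat.dvd_add (hg3.mul_right _) (hg1.mul_right _)
    have hgp : Nat.gcd n k ∣ p := by rw [hpmn]; exact Nat.dvd_add (hg3.mul_right _) (hg1.mul_right _)
    have : Nat.gcd n k ∣ Nat.gcd p q := Nat.dvd_gcd hgp hgq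
    rw [Nat.Coprime] at hpq ⊢
    rw [hpq] at this
    exact Nat.dvd_one.mp this
  -- the counting function eN j = ceil(j*n/k)
  set eN : ℕ → ℕ := fun j => (j * n + (k-1)) / k with heNdef
  have hB : ∀ j : ℕ, j * n ≤ k * eN j ∧ k * eN j < j * n + k := by
    intro j
    have h1 := Nat.div_add_mod (j * n + (k-1)) k
    have h2 := Nat.mod_lt (j * n + (k-1)) hk0
    have he : eN j = (j * n + (k-1)) / k := rfl
    rw [he]
    set KD := k * ((j * n + (k-1)) / k) with hKD
    set R := (j * n + (k-1)) % k with hR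
    set A := j * n with hA
    omega
  have hstep : ∀ j, eN (j+1) = eN j ∨ eN (j+1) = eN j + 1 := by
    intro j
    obtain ⟨hB1, hB2⟩ := hB j
    obtain ⟨hB1', hB2'⟩ := hB (j+1)
    have hnk' : n < k := by omega
    have hup : eN (j+1) < eN j + 2 := by
      have : k * eN (j+1) < k * (eN j + 2) := by
        calc k * eN (j+1) < (j+1) * n + k := hB2'
          _ = j * n + n + k := by ring
          _ ≤ k * eN j + n + k := by omega
          _ < k * (eN j + 2) := by
              have : k * (eN j + 2) = k * eN j + k + k := by ring
              omega
      exact Nat.lt_of_mul_lt_mul_left this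
    have hlo : eN j < eN (j+1) + 1 := by
      have : k * eN j < k * (eN (j+1) + 1) := by
        calc k * eN j < j * n + k := hB2
          _ ≤ (j+1) * n + k := by
              have : (j+1) * n = j * n + n := by ring
              omega
          _ ≤ k * eN (j+1) + k := by omega
          _ = k * (eN (j+1) + 1) := by ring
      exact Nat.lt_of_mul_lt_mul_left this
    omega
  have heN0 : eN 0 = 0 := by
    obtain ⟨hB1, hB2⟩ := hB 0
    have : k * eN 0 < k * 1 := by
      calc k * eN 0 < 0 * n + k := hB2
        _ = k * 1 := by ring
    have := Nat.lt_of_mul_lt_mul_left this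
    omega
  have heN1 : eN 1 = 1 := by
    obtain ⟨hB1, hB2⟩ := hB 1
    have hup : eN 1 < 2 := by
      apply Nat.lt_of_mul_lt_mul_left (a := k)
      calc k * eN 1 < 1 * n + k := hB2
        _ ≤ k + k := by omega
        _ = k * 2 := by ring
    have hlo : 0 < eN 1 := by
      rcases Nat.eq_zero_or_pos (eN 1) with h | h
      · rw [h] at hB1; simp at hB1; omega
      · exact h
    omega
  have heNk : eN k = n := by
    obtain ⟨hB1, hB2⟩ := hB k
    have hup : eN k < n + 1 := by
      apply Nat.lt_of_mul_lt_mul_left (a := k)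
      calc k * eN k < k * n + k := by
            have : k * n = n * k := by ring
            omega
        _ = k * (n + 1) := by ring
    have hlo : n ≤ eN k := Nat.le_of_mul_le_mul_left hB1 hk0
    omega
  have heNk1 : eN (k-1) = n := by
    obtain ⟨hB1, hB2⟩ := hB (k-1)
    have he : (k-1) * n = k * n - n := by
      have : (k-1) * n + n = k * n := by
        have hh : k - 1 + 1 = k := by omega
        calc (k-1) * n + n = (k - 1 + 1) * n := by ring
          _ = k * n := by rw [hh]
      omega
    have hnk' : n < k := by omega
    have hup : eN (k-1) < n + 1 := by
      apply Nat.lt_of_mul_lt_mul_left (a := k)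
      have : k * eN (k-1) < k * n - n + k := by omega
      calc k * eN (k-1) < k * n - n + k := this
        _ ≤ k * n + k := by omega
        _ = k * (n+1) := by ring
      -- need k*n - n + k ≤ k*(n+1) ok
    have hlo : n ≤ eN (k-1) := by
      have h3 : k * n < k * (eN (k-1) + 1) := by
        have : k * (eN (k-1) + 1) = k * eN (k-1) + k := by ring
        omega
      have := Nat.lt_of_mul_lt_mul_left h3
      omega
    omega
  have hEle : ∀ j, eN j ≤ j := by
    intro j
    induction j with
    | zero => omega
    | succ j ih => rcases hstep j with h | h <;> omega
  -- positions and one-counts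
  set P : ℕ → ℕ := fun j => (j - eN j) * b + eN j * d with hPdef
  set Q : ℕ → ℕ := fun j => (j - eN j) * a + eN j * c with hQdef
  have hPz : ∀ j, (P j : ℤ) = ((j:ℤ) - eN j) * b + (eN j : ℤ) * d := by
    intro j
    have : P j = (j - eN j) * b + eN j * d := rfl
    rw [this]
    push_cast [Nat.cast_sub (hEle j)]
    ring
  have hQz : ∀ j, (Q j : ℤ) = ((j:ℤ) - eN j) * a + (eN j : ℤ) * c := by
    intro j
    have : Q j = (j - eN j) * a + eN j * c := rfl
    rw [this]
    push_cast [Nat.cast_sub (hEle j)]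
    ring
  have hKEY : ∀ (j i : ℕ) (C : ℤ),
      ((P j : ℤ) + i) * p
        = ((Q j : ℤ) + C) * q - ((eN j : ℤ) * k - (j:ℤ) * n)
          - (m:ℤ) * (C * b - (i:ℤ) * a) - (n:ℤ) * (C * d - (i:ℤ) * c) := by
    intro j i C
    rw [hPz j, hQz j, hpz, hqz, hkz]
    linear_combination (((j:ℤ) - eN j) * n - (eN j : ℤ) * m) * hFz
  -- bounds in ℤ form
  have hBz : ∀ j : ℕ, (j:ℤ) * n ≤ (eN j : ℤ) * k ∧ (eN j : ℤ) * k < (j:ℤ) * n + k := by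
    intro j
    obtain ⟨h1, h2⟩ := hB j
    constructor
    · have h1' : ((j * n : ℕ) : ℤ) ≤ ((k * eN j : ℕ) : ℤ) := by exact_mod_cast h1
      push_cast at h1'
      linarith
    · have h2' : ((k * eN j : ℕ) : ℤ) < ((j * n + k : ℕ) : ℤ) := by exact_mod_cast h2
      push_cast at h2'
      linarith
  have hCEILc : ∀ j, eN (j+1) = eN j + 1 → ∀ i : ℕ, i ≤ d + 1 →
      ⌈(((P j + i) * p : ℕ) : ℚ) / (q:ℚ)⌉ = (Q j : ℤ) + ⌈((i * c : ℕ) : ℚ) / (d:ℚ)⌉ := by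
    intro j hδ
    apply ceil_c_case (P j) (Q j) ((eN j : ℤ) * k - (j:ℤ) * n) hq hd hb2 hm0 hn0 hFz hqz
    · intro i C
      have h := hKEY j i C
      linarith [h]
    · obtain ⟨hbj1, hbj2⟩ := hBz j
      linarith
    · obtain ⟨hbj1', hbj2'⟩ := hBz (j+1)
      have hδz : ((eN (j+1) : ℤ)) = (eN j : ℤ) + 1 := by exact_mod_cast hδ
      rw [hδz] at hbj2'
      push_cast at hbj2'
      have e1 : ((eN j : ℤ) + 1) * k = (eN j : ℤ) * k + k := by ring
      have e2 : ((j:ℤ) + 1) * n = (j:ℤ) * n + n := by ring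
      have h5 : (eN j : ℤ) * k < (j:ℤ) * n + n := by linarith
      linarith [Int.add_one_le_iff.mpr h5]
  have hCEILa : ∀ j, eN (j+1) = eN j → ∀ i : ℕ, i ≤ b + 1 →
      ⌈(((P j + i) * p : ℕ) : ℚ) / (q:ℚ)⌉ = (Q j : ℤ) + ⌈((i * a : ℕ) : ℚ) / (b:ℚ)⌉ := by
    intro j hδ
    apply ceil_a_case (P j) (Q j) ((eN j : ℤ) * k - (j:ℤ) * n) hq hd hb2 hm0 hn0 hFz hqz
    · intro i C
      have h := hKEY j i C
      linarith [h]
    · obtain ⟨hbj1', hbj2'⟩ := hBz (j+1)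
      have hδz : ((eN (j+1) : ℤ)) = (eN j : ℤ) := by exact_mod_cast hδ
      rw [hδz] at hbj1'
      push_cast at hbj1'
      have e2 : ((j:ℤ) + 1) * n = (j:ℤ) * n + n := by ring
      linarith
    · obtain ⟨hbj1, hbj2⟩ := hBz j
      have hkz' : (k:ℤ) = (m:ℤ) + n := hkz
      linarith [Int.add_one_le_iff.mpr hbj2]
  -- the block sequence
  set ζ : ℕ → ℕ × ℕ := fun i => if eN (i-1) < eN i then (c, d) else (a, b) with hζdef
  set rr : ℚ := (p:ℚ)/(q:ℚ) with hrrdef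
  have hrralpha : ∀ N : ℕ, alpha01 rr N
      = ⌈(((N+1)*p : ℕ):ℚ)/(q:ℚ)⌉ - ⌈((N*p:ℕ):ℚ)/(q:ℚ)⌉ := fun N => alpha_cast p q N
  -- block word identities
  have hBLOCKc : ∀ j, eN (j+1) = eN j + 1 → segA rr (P j) d = word01 ((c:ℚ)/(d:ℚ)) d := by
    intro j hδ
    unfold segA word01
    apply List.map_congr_left
    intro i hi
    have hid : i < d := List.mem_range.mp hi
    rw [hrralpha, alpha_cast c d]
    have e1 : P j + i + 1 + 1 = P j + (i + 2) := by omega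
    have e2 : P j + i + 1 = P j + (i + 1) := by omega
    rw [e1, e2, hCEILc j hδ (i+2) (by omega), hCEILc j hδ (i+1) (by omega)]
    have e3 : i + 1 + 1 = i + 2 := by omega
    rw [e3]
    ring
  have hBLOCKa : ∀ j, eN (j+1) = eN j → segA rr (P j) b = word01 ((a:ℚ)/(b:ℚ)) b := by
    intro j hδ
    unfold segA word01
    apply List.map_congr_left
    intro i hi
    have hid : i < b := List.mem_range.mp hi
    rw [hrralpha, alpha_cast a b]
    have e1 : P j + i + 1 + 1 = P j + (i + 2) := by omega
    have e2 : P j + i + 1 = P j + (i + 1) := by omega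
    rw [e1, e2, hCEILa j hδ (i+2) (by omega), hCEILa j hδ (i+1) (by omega)]
    have e3 : i + 1 + 1 = i + 2 := by omega
    rw [e3]
    ring
  -- step for P
  have hPstepc : ∀ j, eN (j+1) = eN j + 1 → P (j+1) = P j + d := by
    intro j hδ
    have h1 : P (j+1) = (j + 1 - eN (j+1)) * b + eN (j+1) * d := rfl
    have h2 : P j = (j - eN j) * b + eN j * d := rfl
    rw [h1, h2, hδ]
    have e : j + 1 - (eN j + 1) = j - eN j := by omega
    rw [e]
    ring
  have hPstepa : ∀ j, eN (j+1) = eN j → P (j+1) = P j + b := by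
    intro j hδ
    have h1 : P (j+1) = (j + 1 - eN (j+1)) * b + eN (j+1) * d := rfl
    have h2 : P j = (j - eN j) * b + eN j * d := rfl
    rw [h1, h2, hδ]
    have e : j + 1 - eN j = (j - eN j) + 1 := by
      have := hEle j
      omega
    rw [e]
    ring
  have hP0 : P 0 = 0 := by
    have h1 : P 0 = (0 - eN 0) * b + eN 0 * d := rfl
    rw [h1, heN0]
    omega
  have hPk : P k = q := by
    have h1 : P k = (k - eN k) * b + eN k * d := rfl
    rw [h1, heNk]
    have e : k - n = m := by omega
    rw [e, hqmn]
  -- blocks of wordsOf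
  have hWblock : ∀ j : ℕ,
      word01 (((ζ (j+1)).1 : ℚ) / ((ζ (j+1)).2 : ℚ)) (ζ (j+1)).2 = segA rr (P j) (if eN j < eN (j+1) then d else b) := by
    intro j
    have hz : ζ (j+1) = if eN j < eN (j+1) then (c, d) else (a, b) := by
      rw [hζdef]
      simp only [Nat.add_sub_cancel]
    rcases hstep j with h | h
    · have hcond : ¬ (eN j < eN (j+1)) := by omega
      rw [hz, if_neg hcond, if_neg hcond]
      exact (hBLOCKa j h).symm
    · have hcond : eN j < eN (j+1) := by omega
      rw [hz, if_pos hcond, if_pos hcond]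
      exact (hBLOCKc j h).symm
  have hFL : ∀ j, (wordsOf ζ j).flatten = segA rr 0 (P j) := by
    intro j
    induction j with
    | zero =>
      rw [hP0]
      unfold wordsOf segA
      simp
    | succ j ih =>
      unfold wordsOf at ih ⊢
      rw [List.range_succ, List.map_append, List.flatten_append, ih]
      simp only [List.map_cons, List.map_nil, List.flatten_cons, List.flatten_nil, List.append_nil]
      rw [hWblock j]
      rcases hstep j with h | h
      · have hcond : ¬ (eN j < eN (j+1)) := by omega
        rw [if_neg hcond, hPstepa j h]
        have hsp := segA_append rr 0 (P j) b
        simp only [Nat.zero_add] at hsp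
        exact hsp.symm
      · have hcond : eN j < eN (j+1) := by omega
        rw [if_pos hcond, hPstepc j h]
        have hsp := segA_append rr 0 (P j) d
        simp only [Nat.zero_add] at hsp
        exact hsp.symm
  have hFLAT : word01 rr q = (wordsOf ζ k).flatten := by
    rw [hFL k, hPk, word01_eq_segA]
  have hζ1 : ζ 1 = (c, d) := by
    rw [hζdef]
    simp only []
    have : eN (1-1) < eN 1 := by
      rw [(by omega : (1:ℕ) - 1 = 0), heN0, heN1]
      omega
    rw [if_pos this]
  have hζk : ζ k = (a, b) := by
    rw [hζdef]
    simp only []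
    have hkk : k - 1 + 1 = k := by omega
    have : ¬ (eN (k-1) < eN k) := by
      rw [heNk1, heNk]
      omega
    rw [if_neg this]
  have hζmem : ∀ i, 1 ≤ i → i ≤ k → ζ i = (a, b) ∨ ζ i = (c, d) := by
    intro i _ _
    rw [hζdef]
    simp only []
    split_ifs
    · right; rfl
    · left; rfl
  -- ===================== PART 2 =====================
  set dl : ℕ → ℤ := fun t => alpha01 ((n:ℚ)/(k:ℚ)) t with hdldef
  have hceilnk : ∀ t : ℕ, ⌈((t * n : ℕ):ℚ)/(k:ℚ)⌉ = (eN t : ℤ) := by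
    intro t
    obtain ⟨h1', h2'⟩ := hBz t
    apply ceil_div_eq hk0
    · push_cast
      linarith
    · push_cast
      linarith
  have hdleq : ∀ t, dl t = (eN (t+1) : ℤ) - (eN t : ℤ) := by
    intro t
    have h := alpha_cast n k t
    rw [hceilnk, hceilnk] at h
    exact h
  have hdl01 : ∀ t, dl t = 0 ∨ dl t = 1 := by
    intro t
    rw [hdleq t]
    rcases hstep t with h | h
    · left; rw [h]; ring
    · right; rw [h]; push_cast; ring
  have hsum_dl : ∀ s t : ℕ, ∑ i ∈ Finset.range t, dl (s + i) = (eN (s+t) : ℤ) - (eN s : ℤ) := by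
    intro s t
    have h := sum_alpha ((n:ℚ)/(k:ℚ)) s t
    have hc : ∀ N : ℕ, ⌈((N:ℕ):ℚ) * ((n:ℚ)/(k:ℚ))⌉ = (eN N : ℤ) := by
      intro N
      rw [show ((N:ℕ):ℚ) * ((n:ℚ)/(k:ℚ)) = ((N * n : ℕ):ℚ)/(k:ℚ) by push_cast; ring]
      exact hceilnk N
    rw [hc, hc] at h
    exact h
  have hPART2 : ∀ j, 1 < j → j ≤ k → ∃ r : ℕ, r ≤ k - j ∧
      (∀ i : ℕ, i < r → ζ (1 + i) = ζ (j + i)) ∧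
      ζ (1 + r) = (c, d) ∧ ζ (j + r) = (a, b) := by
    intro j hj1 hjk
    set Pp := j - 1 with hPpdef
    have hPp1 : 1 ≤ Pp := by omega
    have hPpk : Pp < k := by omega
    have H : ∀ t, t ≤ k - Pp → ∑ i ∈ Finset.range t, dl (Pp + i) ≤ ∑ i ∈ Finset.range t, dl i := by
      intro t ht
      have hh1 : ∑ i ∈ Finset.range t, dl (Pp + i) = (eN (Pp+t) : ℤ) - eN Pp := hsum_dl Pp t
      have hh2 : ∑ i ∈ Finset.range t, dl i = (eN t : ℤ) := by
        have h := hsum_dl 0 t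
        simp only [Nat.zero_add, heN0, Nat.cast_zero, sub_zero] at h
        exact h
      rw [hh1, hh2]
      have hq1 : (((Pp+t) * n : ℕ):ℚ)/(k:ℚ) = ((Pp * n : ℕ):ℚ)/(k:ℚ) + ((t * n : ℕ):ℚ)/(k:ℚ) := by
        push_cast; ring
      have hsub := ceil_subadd (((Pp * n : ℕ):ℚ)/(k:ℚ)) (((t * n : ℕ):ℚ)/(k:ℚ))
      rw [← hq1, hceilnk (Pp+t), hceilnk Pp, hceilnk t] at hsub
      linarith
    have HS : ∑ i ∈ Finset.range (k - Pp), dl (Pp + i) < ∑ i ∈ Finset.range (k - Pp), dl i := by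
      have hh1 : ∑ i ∈ Finset.range (k-Pp), dl (Pp + i) = (eN k : ℤ) - eN Pp := by
        have h := hsum_dl Pp (k - Pp)
        rw [show Pp + (k - Pp) = k by omega] at h
        exact h
      have hh2 : ∑ i ∈ Finset.range (k-Pp), dl i = (eN (k-Pp) : ℤ) := by
        have h := hsum_dl 0 (k-Pp)
        simp only [Nat.zero_add, heN0, Nat.cast_zero, sub_zero] at h
        exact h
      rw [hh1, hh2, heNk]
      have hcml := ceil_compl (x := n) (y := k) hnk hk0 (by omega : 0 < Pp) hPpk
      rw [hceilnk Pp, hceilnk (k-Pp)] at hcml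
      push_cast at hcml ⊢
      linarith
    obtain ⟨t, htT, hagree, hft, hgt⟩ :=
      firstdiff dl (fun i => dl (Pp + i)) (k - Pp) hdl01 (fun i => hdl01 _) H HS
    have hgt' : dl (Pp + t) = 0 := hgt
    refine ⟨t, by omega, ?_, ?_, ?_⟩
    · intro i hi
      have he : dl i = dl (Pp + i) := hagree i hi
      have hZ : (eN (i+1) : ℤ) - eN i = (eN (Pp+i+1) : ℤ) - eN (Pp+i) := by
        rw [← hdleq, ← hdleq]
        exact he
      have hiff : eN (1 + i - 1) < eN (1 + i) ↔ eN (j + i - 1) < eN (j + i) := by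
        have e1 : 1 + i - 1 = i := by omega
        have e2 : 1 + i = i + 1 := by omega
        have e3 : j + i - 1 = Pp + i := by omega
        have e4 : j + i = Pp + i + 1 := by omega
        rw [e1, e2, e3, e4]
        omega
      rw [hζdef]
      simp only []
      exact if_congr hiff rfl rfl
    · have h1 := hdleq t
      rw [hft] at h1
      have hlt : eN (1 + t - 1) < eN (1 + t) := by
        have e1 : 1 + t - 1 = t := by omega
        have e2 : 1 + t = t + 1 := by omega
        rw [e1, e2]
        omega
      rw [hζdef]
      simp only []
      exact if_pos hlt
    · have h1 := hdleq (Pp + t)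
      rw [hgt'] at h1
      have hlt : ¬ (eN (j + t - 1) < eN (j + t)) := by
        have e1 : j + t - 1 = Pp + t := by omega
        have e2 : j + t = Pp + t + 1 := by omega
        rw [e1, e2]
        omega
      rw [hζdef]
      simp only []
      exact if_neg hlt
  -- ===================== PART 3 =====================
  have hPlt : ∀ t, P t < P (t+1) := by
    intro t
    rcases hstep t with h | h
    · rw [hPstepa t h]; omega
    · rw [hPstepc t h]; omega
  have hPmono : ∀ s t, s ≤ t → P s ≤ P t := by
    intro s t hst
    induction t with
    | zero =>
      have e : s = 0 := by omega
      rw [e]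
    | succ t ih =>
      rcases Nat.eq_or_lt_of_le hst with h | h
      · rw [h]
      · exact le_trans (ih (by omega)) (le_of_lt (hPlt t))
  have hPk1 : P (k-1) + b = q := by
    have hδ : eN (k-1+1) = eN (k-1) := by
      rw [show k - 1 + 1 = k by omega, heNk, heNk1]
    have h := hPstepa (k-1) hδ
    rw [show k - 1 + 1 = k by omega, hPk] at h
    exact h.symm
  have hP1pos : 0 < P 1 := by
    have h := hPlt 0
    rw [hP0] at h
    norm_num at h
    exact h
  have hrr0 : 0 ≤ rr := by rw [hrrdef]; positivity
  have hrr1 : rr ≤ 1 := by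
    rw [hrrdef, div_le_one hq']
    exact_mod_cast le_of_lt hpltq
  have hca1 : ⌈((1 * c : ℕ):ℚ)/(d:ℚ)⌉ = 1 := by
    apply ceil_div_eq hd (E := 1)
    · push_cast; omega
    · push_cast; omega
  have hab1 : ⌈((1 * a : ℕ):ℚ)/(b:ℚ)⌉ = 1 := by
    apply ceil_div_eq hb (E := 1)
    · push_cast; omega
    · push_cast; omega
  have h0c : ⌈((0 * c : ℕ):ℚ)/(d:ℚ)⌉ = 0 := by
    apply ceil_div_eq hd (E := 0)
    · push_cast; omega
    · push_cast; omega
  have h0a : ⌈((0 * a : ℕ):ℚ)/(b:ℚ)⌉ = 0 := by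
    apply ceil_div_eq hb (E := 0)
    · push_cast; omega
    · push_cast; omega
  have hqq : ⌈((q * p : ℕ):ℚ)/(q:ℚ)⌉ = (p:ℤ) := by
    apply ceil_div_eq hq (E := p)
    · push_cast
      exact le_of_eq (by ring)
    · push_cast
      have hqz0 : (0:ℤ) < (q:ℤ) := by exact_mod_cast hq
      have e : (q:ℤ) * p = (p:ℤ) * q := by ring
      linarith only [e, hqz0]
  have h1p : ⌈((1 * p : ℕ):ℚ)/(q:ℚ)⌉ = 1 := by
    apply ceil_div_eq hq (E := 1)
    · push_cast; omega
    · push_cast; omega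
  have hsum_rr : ∀ s t : ℕ, ∑ i ∈ Finset.range t, alpha01 rr (s + i)
      = ⌈(((s+t)*p : ℕ):ℚ)/(q:ℚ)⌉ - ⌈((s*p:ℕ):ℚ)/(q:ℚ)⌉ := by
    intro s t
    have h := sum_alpha rr s t
    have hc : ∀ N : ℕ, ⌈((N:ℕ):ℚ) * rr⌉ = ⌈((N*p:ℕ):ℚ)/(q:ℚ)⌉ := by
      intro N
      rw [hrrdef]
      congr 1
      push_cast
      ring
    rw [hc, hc] at h
    exact h
  have hPART3 : ∀ j, 1 < j → j ≤ k →
      List.Lex (· < ·) (((wordsOf ζ k).drop (j - 1)).flatten)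
        (((wordsOf ζ k).flatten).take ((wordsOf ζ k).drop (j - 1)).flatten.length) := by
    intro j hj1 hjk
    set J := j - 1 with hJdef
    have hJ1 : 1 ≤ J := by omega
    have hJk : J ≤ k - 1 := by omega
    set D := P J with hDdef
    have hD0 : 0 < D := lt_of_lt_of_le hP1pos (hPmono 1 J hJ1)
    have hD2 : D + 2 ≤ q := by
      have h := hPmono J (k-1) (by omega)
      omega
    have hDq : D < q := by omega
    -- the boundary ceil values
    have hceilD0 : ⌈((D * p : ℕ):ℚ)/(q:ℚ)⌉ = (Q J : ℤ) := by
      rcases hstep J with h | h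
      · have t0 := hCEILa J h 0 (by omega)
        rw [← hDdef, h0a] at t0
        simpa using t0
      · have t0 := hCEILc J h 0 (by omega)
        rw [← hDdef, h0c] at t0
        simpa using t0
    have hceilD1 : ⌈(((D+1) * p : ℕ):ℚ)/(q:ℚ)⌉ = (Q J : ℤ) + 1 := by
      rcases hstep J with h | h
      · have t1 := hCEILa J h 1 (by omega)
        rw [← hDdef, hab1] at t1
        exact t1
      · have t1 := hCEILc J h 1 (by omega)
        rw [← hDdef, hca1] at t1
        exact t1
    have hcmpl : ⌈((D * p : ℕ):ℚ)/(q:ℚ)⌉ + ⌈(((q-D) * p : ℕ):ℚ)/(q:ℚ)⌉ = (p:ℤ) + 1 :=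
      ceil_compl hpq hq hD0 hDq
    -- first difference
    set T0 := q - D - 1 with hT0def
    have hT0pos : 0 < T0 := by omega
    have H : ∀ t, t ≤ T0 → ∑ i ∈ Finset.range t, alpha01 rr (D + i + 1)
        ≤ ∑ i ∈ Finset.range t, alpha01 rr (0 + i + 1) := by
      intro t ht
      have hgsum : ∑ i ∈ Finset.range t, alpha01 rr (D + i + 1)
          = ⌈(((D+1+t)*p : ℕ):ℚ)/(q:ℚ)⌉ - ⌈(((D+1)*p:ℕ):ℚ)/(q:ℚ)⌉ := by
        rw [← hsum_rr (D+1) t]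
        apply Finset.sum_congr rfl
        intro i _
        exact congrArg (alpha01 rr) (by omega)
      have hfsum : ∑ i ∈ Finset.range t, alpha01 rr (0 + i + 1)
          = ⌈(((1+t)*p : ℕ):ℚ)/(q:ℚ)⌉ - ⌈((1*p:ℕ):ℚ)/(q:ℚ)⌉ := by
        rw [← hsum_rr 1 t]
        apply Finset.sum_congr rfl
        intro i _
        exact congrArg (alpha01 rr) (by omega)
      rw [hgsum, hfsum, h1p, hceilD1]
      have he : (((D+1+t)*p : ℕ):ℚ)/(q:ℚ) = ((D*p:ℕ):ℚ)/(q:ℚ) + (((1+t)*p:ℕ):ℚ)/(q:ℚ) := by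
        push_cast; ring
      have hsub := ceil_subadd (((D*p:ℕ):ℚ)/(q:ℚ)) ((((1+t)*p:ℕ):ℚ)/(q:ℚ))
      rw [← he, hceilD0] at hsub
      linarith only [hsub]
    have HS : ∑ i ∈ Finset.range T0, alpha01 rr (D + i + 1)
        < ∑ i ∈ Finset.range T0, alpha01 rr (0 + i + 1) := by
      have eg := hsum_rr (D+1) T0
      rw [show D + 1 + T0 = q by omega] at eg
      have hgsum : ∑ i ∈ Finset.range T0, alpha01 rr (D + i + 1)
          = ⌈((q*p : ℕ):ℚ)/(q:ℚ)⌉ - ⌈(((D+1)*p:ℕ):ℚ)/(q:ℚ)⌉ := by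
        rw [← eg]
        apply Finset.sum_congr rfl
        intro i _
        exact congrArg (alpha01 rr) (by omega)
      have ef := hsum_rr 1 T0
      rw [show 1 + T0 = q - D by omega] at ef
      have hfsum : ∑ i ∈ Finset.range T0, alpha01 rr (0 + i + 1)
          = ⌈(((q-D)*p : ℕ):ℚ)/(q:ℚ)⌉ - ⌈((1*p:ℕ):ℚ)/(q:ℚ)⌉ := by
        rw [← ef]
        apply Finset.sum_congr rfl
        intro i _
        exact congrArg (alpha01 rr) (by omega)
      rw [hgsum, hfsum, h1p, hceilD1, hqq]
      linarith only [hcmpl, hceilD0]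
    obtain ⟨t, htT, hagree, hft, hgt⟩ :=
      firstdiff (fun i => alpha01 rr (0 + i + 1)) (fun i => alpha01 rr (D + i + 1)) T0
        (fun i => alpha_mem hrr0 hrr1 _) (fun i => alpha_mem hrr0 hrr1 _) H HS
    have hft' : alpha01 rr (0 + t + 1) = 1 := hft
    have hgt' : alpha01 rr (D + t + 1) = 0 := hgt
    -- list manipulations
    have hflatW : (wordsOf ζ k).flatten = segA rr 0 q := by
      rw [← hFLAT, word01_eq_segA]
    have hsplitW : (wordsOf ζ k).take J = wordsOf ζ J := by
      unfold wordsOf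
      rw [← List.map_take, List.take_range, min_eq_left (by omega : J ≤ k)]
    have hdropflat : ((wordsOf ζ k).drop J).flatten = segA rr D (q - D) := by
      have hh1 : (wordsOf ζ k).take J ++ (wordsOf ζ k).drop J = wordsOf ζ k :=
        List.take_append_drop _ _
      have hh2 : ((wordsOf ζ k).take J).flatten ++ ((wordsOf ζ k).drop J).flatten
          = (wordsOf ζ k).flatten := by
        rw [← List.flatten_append, hh1]
      have hFLJ : ((wordsOf ζ k).take J).flatten = segA rr 0 D := by
        rw [hsplitW, hFL J, ← hDdef]
      rw [hFLJ, hflatW] at hh2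
      have hh3 : segA rr 0 q = segA rr 0 D ++ segA rr D (q - D) := by
        have h := segA_append rr 0 D (q - D)
        rw [show D + (q - D) = q by omega] at h
        simpa using h
      rw [hh3] at hh2
      exact List.append_cancel_left hh2
    have hlen : (segA rr D (q - D)).length = q - D := by simp [segA]
    rw [hdropflat, hlen, hflatW]
    have htake : (segA rr 0 q).take (q - D) = segA rr 0 (q - D) := by
      have hh3 : segA rr 0 q = segA rr 0 (q - D) ++ segA rr (q - D) D := by
        have h := segA_append rr 0 (q - D) D
        rw [show (q - D) + D = q by omega] at h
        simpa using h
      rw [hh3]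
      apply List.take_left'
      simp [segA]
    rw [htake]
    show List.Lex (· < ·) ((List.range (q-D)).map fun i => alpha01 rr (D + i + 1))
        ((List.range (q-D)).map fun i => alpha01 rr (0 + i + 1))
    apply lex_of_firstdiff t (fun i => alpha01 rr (D + i + 1))
      (fun i => alpha01 rr (0 + i + 1)) (q - D) (by omega)
      (fun i hi => (hagree i hi).symm)
    show alpha01 rr (D + t + 1) < alpha01 rr (0 + t + 1)
    rw [hft', hgt']
    norm_num
  exact ⟨k, ζ, hk2, hζmem, hζ1, hζk, hFLAT, hPART2, hPART3⟩
end

section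
/- Let a/b and c/d be Farey neighbors with 0 < a/b < c/d ≤ 1 and let p/q = (a+c)/(b+d) be their mediant. Then W^{01}_{p/q} = W^{01}_{c/d} · W^{01}_{a/b} = (W^{01}_{a/b})′ · W^{01}_{c/d}, where (W^{01}_{a/b})′ denotes the length-b binary word whose value as a base-2 integer is one more than that of W^{01}_{a/b} (this is well defined since a/b < 1, so W^{01}_{a/b} is not the all-ones word). -/
/-- The value of a binary word as a base-2 integer (most significant digit first). -/
def wordVal (w : List ℤ) : ℤ := w.foldl (fun acc x => 2 * acc + x) 0

lemma ceil_nat_div_eq {x y : ℕ} {m : ℤ} (hy : 0 < y)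
    (h1 : (m - 1) * y < (x : ℤ)) (h2 : (x : ℤ) ≤ m * y) :
    ⌈(x : ℚ) / (y : ℚ)⌉ = m := by
  have hy' : (0 : ℚ) < y := by exact_mod_cast hy
  rw [Int.ceil_eq_iff]
  refine ⟨?_, ?_⟩
  · rw [lt_div_iff₀ hy']; exact_mod_cast (by exact_mod_cast h1 : ((m:ℚ) - 1) * y < x)
  · rw [div_le_iff₀ hy']; exact_mod_cast h2

lemma floor_nat_div_eq {x y : ℕ} {m : ℤ} (hy : 0 < y)
    (h1 : m * y ≤ (x : ℤ)) (h2 : (x : ℤ) < (m + 1) * y) :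
    ⌊(x : ℚ) / (y : ℚ)⌋ = m := by
  have hy' : (0 : ℚ) < y := by exact_mod_cast hy
  rw [Int.floor_eq_iff]
  refine ⟨?_, ?_⟩
  · rw [le_div_iff₀ hy']; exact_mod_cast h1
  · rw [div_lt_iff₀ hy']; exact_mod_cast (by exact_mod_cast h2 : (x:ℚ) < ((m:ℚ)+1) * y)

lemma ceil_nat_div_bounds {x y : ℕ} (hy : 0 < y) :
    (⌈(x : ℚ) / (y : ℚ)⌉ - 1) * y < (x : ℤ) ∧ (x : ℤ) ≤ ⌈(x : ℚ) / (y : ℚ)⌉ * y := by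
  have hy' : (0 : ℚ) < y := by exact_mod_cast hy
  constructor
  · have := Int.ceil_lt_add_one ((x : ℚ) / (y : ℚ))
    have h2 : ((⌈(x : ℚ) / (y : ℚ)⌉ : ℚ) - 1) * y < x := by
      rw [← lt_div_iff₀ hy']; linarith
    exact_mod_cast h2
  · have := Int.le_ceil ((x : ℚ) / (y : ℚ))
    have h2 : (x : ℚ) ≤ (⌈(x : ℚ) / (y : ℚ)⌉ : ℚ) * y := by
      rw [← div_le_iff₀ hy']; exact this
    exact_mod_cast h2

lemma floor_nat_div_bounds {x y : ℕ} (hy : 0 < y) :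
    ⌊(x : ℚ) / (y : ℚ)⌋ * y ≤ (x : ℤ) ∧ (x : ℤ) < (⌊(x : ℚ) / (y : ℚ)⌋ + 1) * y := by
  have hy' : (0 : ℚ) < y := by exact_mod_cast hy
  constructor
  · have := Int.floor_le ((x : ℚ) / (y : ℚ))
    have h2 : (⌊(x : ℚ) / (y : ℚ)⌋ : ℚ) * y ≤ x := by rw [← le_div_iff₀ hy']; exact this
    exact_mod_cast h2
  · have := Int.lt_floor_add_one ((x : ℚ) / (y : ℚ))
    have h2 : (x : ℚ) < ((⌊(x : ℚ) / (y : ℚ)⌋ : ℚ) + 1) * y := by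
      rw [← div_lt_iff₀ hy']; exact this
    exact_mod_cast h2

lemma alpha01_div (p q j : ℕ) :
    alpha01 ((p : ℚ) / q) j = ⌈(((j+1) * p : ℕ) : ℚ) / (q : ℚ)⌉ - ⌈((j * p : ℕ) : ℚ) / (q : ℚ)⌉ := by
  unfold alpha01
  congr 2 <;> (push_cast; ring)

lemma beta10_div (p q j : ℕ) :
    beta10 ((p : ℚ) / q) j = ⌊(((j+1) * p : ℕ) : ℚ) / (q : ℚ)⌋ - ⌊((j * p : ℕ) : ℚ) / (q : ℚ)⌋ := by
  unfold beta10
  congr 2 <;> (push_cast; ring)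

lemma word01_succ (r : ℚ) (n : ℕ) :
    word01 r (n + 1) = word01 r n ++ [alpha01 r (n + 1)] := by
  unfold word01
  rw [List.range_succ, List.map_append]
  rfl

lemma word10_succ (r : ℚ) (n : ℕ) :
    word10 r (n + 1) = word10 r n ++ [beta10 r (n + 1)] := by
  unfold word10
  rw [List.range_succ, List.map_append]
  rfl

lemma wordVal_append_singleton (w : List ℤ) (x : ℤ) :
    wordVal (w ++ [x]) = 2 * wordVal w + x := by
  unfold wordVal
  rw [List.foldl_append]
  rfl

lemma word01_add (r : ℚ) (m n : ℕ) :
    word01 r (m + n) = word01 r m ++ (List.range n).map (fun i => alpha01 r (m + i + 1)) := by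
  unfold word01
  rw [List.range_add, List.map_append, List.map_map]
  rfl

lemma alpha01_binary {r : ℚ} (h0 : 0 < r) (h1 : r ≤ 1) (j : ℕ) :
    alpha01 r j = 0 ∨ alpha01 r j = 1 := by
  unfold alpha01
  have e : ((j : ℚ) + 1) * r = (j : ℚ) * r + r := by ring
  have l1 : ⌈(j : ℚ) * r⌉ ≤ ⌈((j : ℚ) + 1) * r⌉ := by
    apply Int.ceil_le_ceil
    nlinarith
  have l2 : ⌈((j : ℚ) + 1) * r⌉ ≤ ⌈(j : ℚ) * r⌉ + 1 := by
    rw [e]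
    calc ⌈(j : ℚ) * r + r⌉ ≤ ⌈(j : ℚ) * r + 1⌉ := Int.ceil_le_ceil (by linarith)
    _ = ⌈(j : ℚ) * r⌉ + 1 := by rw [Int.ceil_add_one]
  omega

section Main

variable {a b c d : ℕ}

/-- L1 : for `j ≤ d+1`, `⌈j p/q⌉ = ⌈j c/d⌉`. -/
lemma L1 (hd : 0 < d) (hb2 : 2 ≤ b) (hF : b * c = a * d + 1)
    {j : ℕ} (hj : j ≤ d + 1) :
    ⌈((j * (a + c) : ℕ) : ℚ) / ((b + d : ℕ) : ℚ)⌉ = ⌈((j * c : ℕ) : ℚ) / (d : ℚ)⌉ := by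
  obtain ⟨hc2, hc1⟩ := ceil_nat_div_bounds (x := j * c) hd
  have hF' : (b : ℤ) * c = (a : ℤ) * d + 1 := by exact_mod_cast hF
  have hq : 0 < b + d := by omega
  have hdz : (0 : ℤ) < d := by exact_mod_cast hd
  have hbz : (2 : ℤ) ≤ b := by exact_mod_cast hb2
  have hjd : (j : ℤ) ≤ (d : ℤ) + 1 := by exact_mod_cast hj
  have hj0 : (0 : ℤ) ≤ j := by positivity
  apply ceil_nat_div_eq hq
  · set m := ⌈((j * c : ℕ) : ℚ) / (d : ℚ)⌉ with hm
    push_cast at hc1 hc2 ⊢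
    have hp : ((m - 1) * d + 1) * ((b:ℤ) + d) ≤ ((j:ℤ) * c) * ((b:ℤ) + d) :=
      mul_le_mul_of_nonneg_right (by linarith) (by linarith)
    have h1 : (d:ℤ) * ((m - 1) * ((b:ℤ) + d)) < d * ((j:ℤ) * ((a:ℤ) + c)) := by nlinarith
    exact lt_of_mul_lt_mul_left h1 (le_of_lt hdz)
  · set m := ⌈((j * c : ℕ) : ℚ) / (d : ℚ)⌉ with hm
    push_cast at hc1 hc2 ⊢
    have hp : ((j:ℤ) * c) * ((b:ℤ) + d) ≤ (m * d) * ((b:ℤ) + d) :=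
      mul_le_mul_of_nonneg_right (by linarith) (by linarith)
    have h1 : (d:ℤ) * ((j:ℤ) * ((a:ℤ) + c)) ≤ d * (m * ((b:ℤ) + d)) := by nlinarith
    exact le_of_mul_le_mul_left h1 hdz

set_option maxHeartbeats 1000000 in
/-- L2 : for `i ≤ b+1`, `⌈(d+i) p/q⌉ = c + ⌈i a/b⌉`. -/
lemma L2 {a b c d : ℕ} (ha : 0 < a) (hd : 0 < d) (hab' : a < b) (hcd : c ≤ d) (hc : 0 < c)
    (hF : b * c = a * d + 1)
    {i k : ℕ} (hk : k = d + i) (hi : i ≤ b + 1) :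
    ⌈((k * (a + c) : ℕ) : ℚ) / ((b + d : ℕ) : ℚ)⌉ = c + ⌈((i * a : ℕ) : ℚ) / (b : ℚ)⌉ := by
  subst hk
  have hb : 0 < b := by omega
  have hF' : (b : ℤ) * c = (a : ℤ) * d + 1 := by exact_mod_cast hF
  have hq : 0 < b + d := by omega
  have hbz : (0 : ℤ) < b := by exact_mod_cast hb
  have hdz : (0 : ℤ) < d := by exact_mod_cast hd
  have haz : (0 : ℤ) < a := by exact_mod_cast ha
  have hcz : (0 : ℤ) < c := by exact_mod_cast hc
  have habz : (a : ℤ) < b := by exact_mod_cast hab'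
  have hcdz : (c : ℤ) ≤ d := by exact_mod_cast hcd
  have hi0 : (0 : ℤ) ≤ i := by positivity
  rcases Nat.lt_or_ge i (b + 1) with hib | hib
  · -- i ≤ b
    have hib' : (i : ℤ) ≤ b := by exact_mod_cast Nat.lt_succ_iff.mp hib
    obtain ⟨hc2, hc1⟩ := ceil_nat_div_bounds (x := i * a) hb
    set m := ⌈((i * a : ℕ) : ℚ) / (b : ℚ)⌉ with hm
    push_cast at hc1 hc2
    -- ip ≤ mq + 1
    have upper : (i:ℤ) * ((a:ℤ) + c) ≤ m * ((b:ℤ) + d) + 1 := by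
      have h1 : (b:ℤ) * ((i:ℤ) * ((a:ℤ) + c)) ≤ b * (m * ((b:ℤ) + d) + 1) := by
        have hp : ((i:ℤ) * a) * ((b:ℤ) + d) ≤ (m * b) * ((b:ℤ) + d) :=
          mul_le_mul_of_nonneg_right (by linarith) (by linarith)
        nlinarith
      exact le_of_mul_le_mul_left h1 hbz
    -- ip ≥ (m-1)q + 2
    have lower : (m - 1) * ((b:ℤ) + d) + 2 ≤ (i:ℤ) * ((a:ℤ) + c) := by
      have h1 : (b:ℤ) * ((m - 1) * ((b:ℤ) + d) + 1) < b * ((i:ℤ) * ((a:ℤ) + c)) := by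
        have hp : (((m - 1) * b + 1)) * ((b:ℤ) + d) ≤ ((i:ℤ) * a) * ((b:ℤ) + d) :=
          mul_le_mul_of_nonneg_right (by linarith) (by linarith)
        nlinarith
      have := lt_of_mul_lt_mul_left h1 (le_of_lt hbz)
      omega
    apply ceil_nat_div_eq hq
    · push_cast
      linarith [hF']
    · push_cast
      linarith [hF']
  · -- i = b + 1
    have hib' : i = b + 1 := by omega
    subst hib'
    have e1 : ⌈(((b+1) * a : ℕ) : ℚ) / (b : ℚ)⌉ = (a : ℤ) + 1 := by
      apply ceil_nat_div_eq hb
      · push_cast; linarith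
      · push_cast; linarith
    rw [e1]
    apply ceil_nat_div_eq hq
    · push_cast; linarith [hF']
    · push_cast; linarith [hF']

set_option maxHeartbeats 1000000 in
/-- L3 : for `1 ≤ j ≤ d+1`, `⌈(b+j) p/q⌉ = a + ⌈j c/d⌉`. -/
lemma L3 {a b c d : ℕ} (ha : 0 < a) (hd : 0 < d) (hab' : a < b) (hcd : c ≤ d)
    (hF : b * c = a * d + 1)
    {j k : ℕ} (hk : k = b + j) (hj1 : 1 ≤ j) (hj : j ≤ d + 1) :
    ⌈((k * (a + c) : ℕ) : ℚ) / ((b + d : ℕ) : ℚ)⌉ = a + ⌈((j * c : ℕ) : ℚ) / (d : ℚ)⌉ := by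
  subst hk
  have hb : 0 < b := by omega
  have hF' : (b : ℤ) * c = (a : ℤ) * d + 1 := by exact_mod_cast hF
  have hq : 0 < b + d := by omega
  have hbz : (0 : ℤ) < b := by exact_mod_cast hb
  have hdz : (0 : ℤ) < d := by exact_mod_cast hd
  have hj1' : (1 : ℤ) ≤ j := by exact_mod_cast hj1
  have hjd : (j : ℤ) ≤ (d : ℤ) + 1 := by exact_mod_cast hj
  obtain ⟨hc2, hc1⟩ := ceil_nat_div_bounds (x := j * c) hd
  set m := ⌈((j * c : ℕ) : ℚ) / (d : ℚ)⌉ with hm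
  push_cast at hc1 hc2
  have upper : (j:ℤ) * ((a:ℤ) + c) < m * ((b:ℤ) + d) := by
    have h1 : (d:ℤ) * ((j:ℤ) * ((a:ℤ) + c)) < d * (m * ((b:ℤ) + d)) := by
      have hp : ((j:ℤ) * c) * ((b:ℤ) + d) ≤ (m * d) * ((b:ℤ) + d) :=
        mul_le_mul_of_nonneg_right (by linarith) (by linarith)
      nlinarith
    exact lt_of_mul_lt_mul_left h1 (le_of_lt hdz)
  have lower : (m - 1) * ((b:ℤ) + d) ≤ (j:ℤ) * ((a:ℤ) + c) := by
    have h1 : (d:ℤ) * ((m - 1) * ((b:ℤ) + d)) ≤ d * ((j:ℤ) * ((a:ℤ) + c)) := by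
      have hp : (((m - 1) * d + 1)) * ((b:ℤ) + d) ≤ ((j:ℤ) * c) * ((b:ℤ) + d) :=
        mul_le_mul_of_nonneg_right (by linarith) (by linarith)
      nlinarith
    exact le_of_mul_le_mul_left h1 hdz
  apply ceil_nat_div_eq hq
  · push_cast; linarith [hF']
  · push_cast; linarith [hF']

set_option maxHeartbeats 1000000 in
/-- L4 : for `1 ≤ j ≤ b+1`, `⌈j p/q⌉ = ⌊j a/b⌋ + 1`. -/
lemma L4 {a b c d : ℕ} (ha : 0 < a) (hd : 0 < d) (hab' : a < b)
    (hF : b * c = a * d + 1)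
    {j : ℕ} (hj1 : 1 ≤ j) (hj : j ≤ b + 1) :
    ⌈((j * (a + c) : ℕ) : ℚ) / ((b + d : ℕ) : ℚ)⌉ = ⌊((j * a : ℕ) : ℚ) / (b : ℚ)⌋ + 1 := by
  have hb : 0 < b := by omega
  have hF' : (b : ℤ) * c = (a : ℤ) * d + 1 := by exact_mod_cast hF
  have hq : 0 < b + d := by omega
  have hbz : (0 : ℤ) < b := by exact_mod_cast hb
  have hdz : (0 : ℤ) < d := by exact_mod_cast hd
  have hj1' : (1 : ℤ) ≤ j := by exact_mod_cast hj1
  have hjb : (j : ℤ) ≤ (b : ℤ) + 1 := by exact_mod_cast hj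
  obtain ⟨hc1, hc2⟩ := floor_nat_div_bounds (x := j * a) hb
  set m := ⌊((j * a : ℕ) : ℚ) / (b : ℚ)⌋ with hm
  push_cast at hc1 hc2
  have lower : m * ((b:ℤ) + d) < (j:ℤ) * ((a:ℤ) + c) := by
    have h1 : (b:ℤ) * (m * ((b:ℤ) + d)) < b * ((j:ℤ) * ((a:ℤ) + c)) := by
      have hp : (m * b) * ((b:ℤ) + d) ≤ ((j:ℤ) * a) * ((b:ℤ) + d) :=
        mul_le_mul_of_nonneg_right (by linarith) (by linarith)
      nlinarith
    exact lt_of_mul_lt_mul_left h1 (le_of_lt hbz)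
  have upper : (j:ℤ) * ((a:ℤ) + c) ≤ (m + 1) * ((b:ℤ) + d) := by
    have h1 : (b:ℤ) * ((j:ℤ) * ((a:ℤ) + c)) ≤ b * ((m + 1) * ((b:ℤ) + d)) := by
      have hp : ((j:ℤ) * a) * ((b:ℤ) + d) ≤ ((m + 1) * b - 1) * ((b:ℤ) + d) :=
        mul_le_mul_of_nonneg_right (by linarith) (by linarith)
      nlinarith
    exact le_of_mul_le_mul_left h1 hbz
  apply ceil_nat_div_eq hq
  · push_cast; linarith
  · push_cast; linarith

lemma Hlem {a b : ℕ} (cop : Nat.Coprime a b) {k : ℕ} (hk1 : 1 ≤ k) (hk2 : k < b) :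
    ⌈((k * a : ℕ) : ℚ) / (b : ℚ)⌉ = ⌊((k * a : ℕ) : ℚ) / (b : ℚ)⌋ + 1 := by
  have hb : 0 < b := by omega
  obtain ⟨hc1, hc2⟩ := floor_nat_div_bounds (x := k * a) hb
  set m := ⌊((k * a : ℕ) : ℚ) / (b : ℚ)⌋ with hm
  have hne : m * (b : ℤ) ≠ ((k * a : ℕ) : ℤ) := by
    intro h
    have hdvd : (b : ℤ) ∣ ((k * a : ℕ) : ℤ) := ⟨m, by linarith [h]⟩
    have hdvd' : b ∣ k * a := by exact_mod_cast hdvd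
    have : b ∣ k := (Nat.Coprime.dvd_of_dvd_mul_right (Nat.Coprime.symm cop) hdvd')
    have := Nat.le_of_dvd (by omega) this
    omega
  apply ceil_nat_div_eq hb
  · have : m * (b : ℤ) < (k * a : ℕ) := lt_of_le_of_ne hc1 hne
    linarith
  · linarith

lemma Fb {a b : ℕ} (ha : 0 < a) (hb : 0 < b) {k : ℕ} (hk : k = b) :
    ⌈((k * a : ℕ) : ℚ) / (b : ℚ)⌉ = a := by
  rw [hk]
  have h1 : (0:ℤ) < a := by exact_mod_cast ha
  have h2 : (0:ℤ) < b := by exact_mod_cast hb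
  apply ceil_nat_div_eq hb <;> push_cast <;> nlinarith

lemma Gb {a b : ℕ} (hb : 0 < b) {k : ℕ} (hk : k = b) :
    ⌊((k * a : ℕ) : ℚ) / (b : ℚ)⌋ = a := by
  rw [hk]
  have h2 : (0:ℤ) < b := by exact_mod_cast hb
  apply floor_nat_div_eq hb <;> push_cast <;> nlinarith

lemma Fb1 {a b : ℕ} (ha : 0 < a) (hab : a < b) {k : ℕ} (hk : k = b + 1) :
    ⌈((k * a : ℕ) : ℚ) / (b : ℚ)⌉ = a + 1 := by
  rw [hk]
  have hb : 0 < b := by omega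
  have h1 : (0:ℤ) < a := by exact_mod_cast ha
  have h2 : (a:ℤ) < b := by exact_mod_cast hab
  apply ceil_nat_div_eq hb <;> push_cast <;> nlinarith

lemma Gb1 {a b : ℕ} (hab : a < b) {k : ℕ} (hk : k = b + 1) :
    ⌊((k * a : ℕ) : ℚ) / (b : ℚ)⌋ = a := by
  rw [hk]
  have hb : 0 < b := by omega
  have h1 : (0:ℤ) ≤ a := by positivity
  have h2 : (a:ℤ) < b := by exact_mod_cast hab
  apply floor_nat_div_eq hb <;> push_cast <;> nlinarith

lemma val_word10 {a b : ℕ} (ha : 0 < a) (hab : a < b) (cop : Nat.Coprime a b) :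
    wordVal (word10 ((a:ℚ)/b) b) = wordVal (word01 ((a:ℚ)/b) b) + 1 := by
  obtain ⟨k, rfl⟩ : ∃ k, b = k + 1 + 1 := ⟨b - 2, by omega⟩
  have hb : 0 < k + 1 + 1 := by omega
  have ind : ∀ n, n + 2 ≤ k + 1 + 1 →
      wordVal (word01 ((a:ℚ)/((k+1+1 : ℕ):ℚ)) n) = wordVal (word10 ((a:ℚ)/((k+1+1 : ℕ):ℚ)) n) := by
    intro n
    induction n with
    | zero => intro _; simp [word01, word10, wordVal]
    | succ n ih =>
      intro h
      rw [word01_succ, word10_succ, wordVal_append_singleton, wordVal_append_singleton,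
        ih (by omega)]
      have e : alpha01 ((a:ℚ)/((k+1+1 : ℕ):ℚ)) (n+1) = beta10 ((a:ℚ)/((k+1+1 : ℕ):ℚ)) (n+1) := by
        rw [alpha01_div, beta10_div, Hlem cop (by omega) (by omega : n + 1 < k+1+1),
          Hlem cop (by omega) (by omega : n + 1 + 1 < k+1+1)]
        ring
      rw [e]
  rw [word01_succ, word01_succ, word10_succ, word10_succ,
    wordVal_append_singleton, wordVal_append_singleton, wordVal_append_singleton,
    wordVal_append_singleton, ind k (by omega)]
  have hA2 : alpha01 ((a:ℚ)/((k+1+1 : ℕ):ℚ)) (k+1+1) = 1 := by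
    rw [alpha01_div, Fb1 ha hab (by omega : k+1+1+1 = (k+1+1) + 1),
      Fb ha hb rfl]
    ring
  have hB2 : beta10 ((a:ℚ)/((k+1+1 : ℕ):ℚ)) (k+1+1) = 0 := by
    rw [beta10_div, Gb1 hab (by omega : k+1+1+1 = (k+1+1) + 1),
      Gb hb rfl]
    ring
  have hAB : alpha01 ((a:ℚ)/((k+1+1 : ℕ):ℚ)) (k+1) =
      beta10 ((a:ℚ)/((k+1+1 : ℕ):ℚ)) (k+1) - 1 := by
    rw [alpha01_div, beta10_div, Fb ha hb rfl,
      Gb hb rfl, Hlem cop (by omega) (by omega : k + 1 < k+1+1)]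
    ring
  rw [hA2, hB2, hAB]
  ring

/-- for Farey neighbors `0 < a/b < c/d ≤ 1` with mediant `p/q`,
`W^{01}_{p/q} = W^{01}_{c/d}·W^{01}_{a/b} = (W^{01}_{a/b})′·W^{01}_{c/d}`, where
`(W^{01}_{a/b})′` is the length-`b` binary word whose base-2 value is one more than
that of `W^{01}_{a/b}`. -/
theorem mediant_word_two_factorizations
    (a b c d : ℕ) (ha : 0 < a) (hb : 0 < b) (hd : 0 < d) (hcd : c ≤ d)
    (hab : Nat.Coprime a b) (hcdcop : Nat.Coprime c d)
    (hFarey : b * c = a * d + 1) :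
    word01 (((a : ℚ) + c) / ((b : ℚ) + d)) (b + d) =
      word01 ((c : ℚ) / d) d ++ word01 ((a : ℚ) / b) b ∧
    ∃ w' : List ℤ, w'.length = b ∧ (∀ x ∈ w', x = 0 ∨ x = 1) ∧
      wordVal w' = wordVal (word01 ((a : ℚ) / b) b) + 1 ∧
      word01 (((a : ℚ) + c) / ((b : ℚ) + d)) (b + d) = w' ++ word01 ((c : ℚ) / d) d := by
  have hc : 0 < c := by
    rcases Nat.eq_zero_or_pos c with h | h
    · subst h; simp at hFarey
    · exact h
  have hab' : a < b := by
    have h1 : a * d < b * d := by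
      calc a * d < a * d + 1 := Nat.lt_succ_self _
      _ = b * c := hFarey.symm
      _ ≤ b * d := Nat.mul_le_mul_left b hcd
    exact Nat.lt_of_mul_lt_mul_right h1
  have hb2 : 2 ≤ b := by omega
  have hr : ((a:ℚ)+c)/((b:ℚ)+d) = (((a+c:ℕ)):ℚ)/(((b+d:ℕ)):ℚ) := by push_cast; ring
  rw [hr]
  set r := (((a+c:ℕ)):ℚ)/(((b+d:ℕ)):ℚ) with hrdef
  have E1 : ∀ i, i < d → alpha01 r (i+1) = alpha01 ((c:ℚ)/d) (i+1) := by
    intro i hi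
    rw [hrdef, alpha01_div, alpha01_div,
      L1 hd hb2 hFarey (by omega : i+1+1 ≤ d+1),
      L1 hd hb2 hFarey (by omega : i+1 ≤ d+1)]
  have E2 : ∀ i, i < b → alpha01 r (d+i+1) = alpha01 ((a:ℚ)/b) (i+1) := by
    intro i hi
    rw [hrdef, alpha01_div, alpha01_div,
      L2 ha hd hab' hcd hc hFarey (by omega : d+i+1+1 = d + (i+1+1)) (by omega : i+1+1 ≤ b+1),
      L2 ha hd hab' hcd hc hFarey (by omega : d+i+1 = d + (i+1)) (by omega : i+1 ≤ b+1)]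
    ring
  have E3 : ∀ i, i < d → alpha01 r (b+i+1) = alpha01 ((c:ℚ)/d) (i+1) := by
    intro i hi
    rw [hrdef, alpha01_div, alpha01_div,
      L3 ha hd hab' hcd hFarey (by omega : b+i+1+1 = b + (i+1+1)) (by omega) (by omega : i+1+1 ≤ d+1),
      L3 ha hd hab' hcd hFarey (by omega : b+i+1 = b + (i+1)) (by omega) (by omega : i+1 ≤ d+1)]
    ring
  have E4 : ∀ i, i < b → alpha01 r (i+1) = beta10 ((a:ℚ)/b) (i+1) := by
    intro i hi
    rw [hrdef, alpha01_div, beta10_div,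
      L4 ha hd hab' hFarey (by omega) (by omega : i+1+1 ≤ b+1),
      L4 ha hd hab' hFarey (by omega) (by omega : i+1 ≤ b+1)]
    ring
  constructor
  · rw [show b + d = d + b by omega, word01_add r d b]
    congr 1
    · unfold word01
      apply List.map_congr_left
      intro i hi
      exact E1 i (List.mem_range.mp hi)
    · unfold word01
      apply List.map_congr_left
      intro i hi
      exact E2 i (List.mem_range.mp hi)
  · refine ⟨word01 r b, ?_, ?_, ?_, ?_⟩
    · simp [word01]
    · intro x hx
      unfold word01 at hx
      rw [List.mem_map] at hx
      obtain ⟨i, hi, rfl⟩ := hx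
      apply alpha01_binary
      · rw [hrdef]
        apply div_pos
        · exact_mod_cast Nat.cast_pos.mpr (by omega : 0 < a + c)
        · exact_mod_cast Nat.cast_pos.mpr (by omega : 0 < b + d)
      · rw [hrdef, div_le_one (by exact_mod_cast Nat.cast_pos.mpr (by omega : 0 < b + d))]
        exact_mod_cast (by omega : a + c ≤ b + d)
    · have hw : word01 r b = word10 ((a:ℚ)/b) b := by
        unfold word01 word10
        apply List.map_congr_left
        intro i hi
        exact E4 i (List.mem_range.mp hi)
      rw [hw, val_word10 ha hab' hab]
    · rw [word01_add r b d]
      congr 1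
      unfold word01
      apply List.map_congr_left
      intro i hi
      exact E3 i (List.mem_range.mp hi)
end Main
end

section
/- Take P/Q = 1/2 with Farey parents A/B = 0/1, S/T = 1/1, and n = 1, and let a/b be a reduced fraction with 1/2 < a/b < 1. In this setting the block B_{1,m} equals the word 0·1^{m+1} and its increment B′_{1,m} equals 1·0^{m+1}. Suppose the period word of the (purely b-periodic) 01-digit sequence of BL(1/2, a/b, 1) decomposes as the concatenation B_{1,m_1}⋯B_{1,m_k}. Then the real number θ′ with purely periodic binary expansion 0.(B′_{1,m_1}⋯B′_{1,m_k} repeated) equals θ_{10}(1/2, 1 − a/b, 1), the 10-convention mechanical angle of the broken line BL(1/2, 1 − a/b, 1); that is, θ′ = Σ_{j≥1} δ_j·2^{−j} where δ_j = ⌊g(j+1)⌋ − ⌊g(j)⌋ and g(x) = x/2 for 0 ≤ x ≤ 2, g(x) = (1 − a/b)(x − 2) + 1 for x ≥ 2. -/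
/-- The broken line with slopes `r` (before) and `s` (after) and hinge abscissa `h`. -/
noncomputable def BLfun (r s : ℚ) (h : ℕ) (x : ℚ) : ℚ :=
  if x ≤ (h : ℚ) then r * x else s * (x - h) + r * h

/-- The 01-digit sequence of the broken line: `γ_j = ⌈f(j+1)⌉ - ⌈f(j)⌉`. -/
noncomputable def gammaBL (r s : ℚ) (h : ℕ) (j : ℕ) : ℤ :=
  ⌈BLfun r s h ((j : ℚ) + 1)⌉ - ⌈BLfun r s h (j : ℚ)⌉

/-- The 10-digit sequence of the broken line: `δ_j = ⌊f(j+1)⌋ - ⌊f(j)⌋`. -/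
noncomputable def deltaBL (r s : ℚ) (h : ℕ) (j : ℕ) : ℤ :=
  ⌊BLfun r s h ((j : ℚ) + 1)⌋ - ⌊BLfun r s h (j : ℚ)⌋

/-- The angle `θ_{01}` of the broken line, `Σ_{j≥1} γ_j 2^{-j}`. -/
noncomputable def theta01BL (r s : ℚ) (h : ℕ) : ℝ :=
  ∑' j : ℕ, (gammaBL r s h (j + 1) : ℝ) / 2 ^ (j + 1)

/-- The angle `θ_{10}` of the broken line, `Σ_{j≥1} δ_j 2^{-j}`. -/
noncomputable def theta10BL (r s : ℚ) (h : ℕ) : ℝ :=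
  ∑' j : ℕ, (deltaBL r s h (j + 1) : ℝ) / 2 ^ (j + 1)

/-- `n`-fold concatenation of a word with itself. -/
def wpow (w : List ℤ) (n : ℕ) : List ℤ := (List.replicate n w).flatten

/-- The block `B_{n,m}`: `B_{n,0} = W_{P/Q}` and, for `m ≥ 1`,
`B_{n,m} = W_{P/Q}^n (W_{S/T} W_{P/Q}^{n-1})^{m-1} W_{S/T}`. -/
def Blk (wP wS : List ℤ) (n m : ℕ) : List ℤ :=
  if m = 0 then wP else wpow wP n ++ wpow (wS ++ wpow wP (n - 1)) (m - 1) ++ wS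

/-- Add one (mod 2, with carry to the next entry) to a reversed binary word. -/
def addOneRev : List ℤ → List ℤ
  | [] => []
  | d :: rest => if d = 0 then 1 :: rest else 0 :: addOneRev rest

/-- The word `W′` obtained from `W` by adding `1` in base 2 with carry to the left;
for a binary word that is not all ones this is the word of the same length whose
value as a base-2 integer is one more. -/
def wordSucc (w : List ℤ) : List ℤ := (addOneRev w.reverse).reverse

/-- The real number with purely periodic binary expansion `0.(L repeated)`. -/
noncomputable def periodicTheta (L : List ℤ) : ℝ :=
  ∑' t : ℕ, (L.getD (t % L.length) 0 : ℝ) / 2 ^ (t + 1)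

/-- The list of blocks `B_{n,m_1}, …, B_{n,m_k}`. -/
def blocksOf (wP wS : List ℤ) (n : ℕ) (ms : ℕ → ℕ) (k : ℕ) : List (List ℤ) :=
  (List.range k).map fun i => Blk wP wS n (ms (i + 1))

/-- The list of incremented blocks `B′_{n,m_1}, …, B′_{n,m_k}`. -/
def blocksOf' (wP wS : List ℤ) (n : ℕ) (ms : ℕ → ℕ) (k : ℕ) : List (List ℤ) :=
  (List.range k).map fun i => wordSucc (Blk wP wS n (ms (i + 1)))

/-!
The broken line with slopes `1 - r`, `1 - s` is `x ↦ x - f(x)`, where `f` is the one with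
slopes `r`, `s`; since `⌊j - y⌋ = j - ⌈y⌉` for integers `j`, its 10-digits are `δ_j = 1 - γ_j`.
For `P/Q = 1/2` and `n = 1` every block is `0·1^{m+1}`, whose increment `1·0^{m+1}` is its
complement, so `θ′` and `θ_{10}(1/2, 1 - a/b, 1)` have the same binary digits.
-/

lemma wpow_succ (w : List ℤ) (n : ℕ) : wpow w (n + 1) = wpow w n ++ w := by
  rw [wpow, List.replicate_succ', List.flatten_append, List.flatten_singleton, ← wpow]

lemma wpow_singleton (x : ℤ) (n : ℕ) : wpow [x] n = List.replicate n x := by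
  induction n with
  | zero => rfl
  | succ n ih => rw [wpow_succ, ih, List.replicate_succ']

lemma Blk_one_succ (wP wS : List ℤ) (m : ℕ) : Blk wP wS 1 (m + 1) = wP ++ wpow wS (m + 1) := by
  simp only [Blk, Nat.add_one_ne_zero, if_false, Nat.add_sub_cancel, Nat.sub_self, wpow_succ]
  simp [wpow]

lemma word01_half : word01 ((1 : ℚ) / 2) 2 = [0, 1] := by
  have c1 : ⌈(1 / 2 : ℚ)⌉ = 1 := by norm_num [Int.ceil_eq_iff]
  have c2 : ⌈(3 / 2 : ℚ)⌉ = 2 := by norm_num [Int.ceil_eq_iff]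
  norm_num [word01, alpha01, List.range_succ, c1, c2]

lemma word01_one : word01 (1 : ℚ) 1 = [1] := by
  norm_num [word01, alpha01]

lemma Blk_half_one (m : ℕ) :
    Blk (word01 ((1 : ℚ) / 2) 2) (word01 (1 : ℚ) 1) 1 m = 0 :: List.replicate (m + 1) 1 := by
  rw [word01_half, word01_one]
  cases m with
  | zero => rfl
  | succ m => rw [Blk_one_succ, wpow_singleton]; rfl

lemma addOneRev_replicate_one_append (n : ℕ) (w : List ℤ) :
    addOneRev (List.replicate n 1 ++ 0 :: w) = List.replicate n 0 ++ 1 :: w := by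
  induction n with
  | zero => simp [addOneRev]
  | succ n ih => simp [List.replicate_succ, addOneRev, ih]

lemma wordSucc_append_zero_replicate_one (w : List ℤ) (n : ℕ) :
    wordSucc (w ++ 0 :: List.replicate n 1) = w ++ 1 :: List.replicate n 0 := by
  simp [wordSucc, List.reverse_replicate, addOneRev_replicate_one_append]

lemma Blk_ne_nil {wP wS : List ℤ} (hP : wP ≠ []) (hS : wS ≠ []) (n m : ℕ) :
    Blk wP wS n m ≠ [] := by
  unfold Blk; split_ifs <;> simp [hP, hS]

lemma flatten_blocksOf_ne_nil {wP wS : List ℤ} (hP : wP ≠ []) (hS : wS ≠ []) (n : ℕ)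
    (ms : ℕ → ℕ) {k : ℕ} (hk : 1 ≤ k) : (blocksOf wP wS n ms k).flatten ≠ [] := by
  obtain ⟨k, rfl⟩ := Nat.exists_eq_add_of_le' hk
  simp [blocksOf, List.range_succ_eq_map, Blk_ne_nil hP hS]

lemma floor_intCast_sub (c : ℤ) (y : ℚ) : ⌊(c : ℚ) - y⌋ = c - ⌈y⌉ := by
  rw [sub_eq_add_neg, Int.floor_intCast_add, Int.floor_neg, sub_eq_add_neg]

lemma BLfun_one_sub (r s : ℚ) (h : ℕ) (x : ℚ) :
    BLfun (1 - r) (1 - s) h x = x - BLfun r s h x := by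
  unfold BLfun; split_ifs <;> ring

lemma deltaBL_one_sub (r s : ℚ) (h j : ℕ) :
    deltaBL (1 - r) (1 - s) h j = 1 - gammaBL r s h j := by
  have hj1 : ((j : ℚ) + 1) = ((j + 1 : ℤ) : ℚ) := by push_cast; ring
  have hj : (j : ℚ) = ((j : ℤ) : ℚ) := rfl
  rw [deltaBL, gammaBL, BLfun_one_sub, BLfun_one_sub, hj1, hj, floor_intCast_sub,
    floor_intCast_sub]
  ring

lemma getD_mod_length_map {L : List ℤ} (hL : L ≠ []) (g : ℤ → ℤ) (t : ℕ) :
    (L.map g).getD (t % (L.map g).length) 0 = g (L.getD (t % L.length) 0) := by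
  have ht : t % L.length < L.length := Nat.mod_lt _ (List.length_pos_iff.mpr hL)
  rw [List.length_map, List.getD_eq_getElem _ _ (by simpa using ht), List.getD_eq_getElem _ _ ht,
    List.getElem_map]

theorem theta10BL_one_sub {r s : ℚ} {h : ℕ} {L : List ℤ} (hL : L ≠ [])
    (hdig : ∀ j : ℕ, 1 ≤ j → gammaBL r s h j = L.getD ((j - 1) % L.length) 0) :
    theta10BL (1 - r) (1 - s) h = periodicTheta (L.map (1 - ·)) := by
  refine tsum_congr fun t => ?_
  rw [deltaBL_one_sub, hdig (t + 1) (by omega), getD_mod_length_map hL, Nat.add_sub_cancel]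

lemma wordSucc_Blk_half_one (m : ℕ) :
    wordSucc (Blk (word01 ((1 : ℚ) / 2) 2) (word01 (1 : ℚ) 1) 1 m) =
      1 :: List.replicate (m + 1) 0 := by
  rw [Blk_half_one]
  exact wordSucc_append_zero_replicate_one [] (m + 1)

lemma flatten_blocksOf'_half_one (ms : ℕ → ℕ) (k : ℕ) :
    (blocksOf' (word01 ((1 : ℚ) / 2) 2) (word01 (1 : ℚ) 1) 1 ms k).flatten =
      (blocksOf (word01 ((1 : ℚ) / 2) 2) (word01 (1 : ℚ) 1) 1 ms k).flatten.map (1 - ·) := by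
  rw [blocksOf', blocksOf, List.map_flatten, List.map_map]
  refine congrArg _ (List.map_congr_left fun i _ => ?_)
  rw [Function.comp_apply, wordSucc_Blk_half_one, Blk_half_one]
  simp

theorem conjugate_angle_half_limb_symmetry_general
    (a b : ℕ)
    (k : ℕ) (hk : 1 ≤ k) (ms : ℕ → ℕ)
    (L : List ℤ)
    (hL : L = (blocksOf (word01 ((1 : ℚ) / 2) 2) (word01 (1 : ℚ) 1) 1 ms k).flatten)
    (hdig : ∀ j : ℕ, 1 ≤ j →
      gammaBL ((1 : ℚ) / 2) ((a : ℚ) / b) 2 j = L.getD ((j - 1) % L.length) 0) :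
    (∀ m : ℕ,
      Blk (word01 ((1 : ℚ) / 2) 2) (word01 (1 : ℚ) 1) 1 m = 0 :: List.replicate (m + 1) 1 ∧
      wordSucc (Blk (word01 ((1 : ℚ) / 2) 2) (word01 (1 : ℚ) 1) 1 m) =
        1 :: List.replicate (m + 1) 0) ∧
    periodicTheta ((blocksOf' (word01 ((1 : ℚ) / 2) 2) (word01 (1 : ℚ) 1) 1 ms k).flatten) =
      theta10BL ((1 : ℚ) / 2) (1 - (a : ℚ) / b) 2 := by
  refine ⟨fun m => ⟨Blk_half_one m, wordSucc_Blk_half_one m⟩, ?_⟩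
  have hne : L ≠ [] := hL ▸
    flatten_blocksOf_ne_nil (by rw [word01_half]; simp) (by rw [word01_one]; simp) 1 ms hk
  have hθ := theta10BL_one_sub hne hdig
  rw [show (1 : ℚ) - 1 / 2 = 1 / 2 by norm_num] at hθ
  rw [hθ, flatten_blocksOf'_half_one, ← hL]

/-- for `P/Q = 1/2` (Farey parents `0/1`, `1/1`), `n = 1`, and a reduced
fraction `1/2 < a/b < 1`: the block `B_{1,m}` is the word `0·1^{m+1}` and `B′_{1,m}` is
`1·0^{m+1}`; and if the period word of the 01-digit sequence of `BL(1/2, a/b, 1)` is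
`B_{1,m_1}⋯B_{1,m_k}`, then the real `θ′` with purely periodic binary expansion
`0.(B′_{1,m_1}⋯B′_{1,m_k})` equals `θ_{10}(1/2, 1 - a/b, 1)`, the 10-convention angle of
the broken line `BL(1/2, 1 - a/b, 1)`. -/
theorem conjugate_angle_half_limb_symmetry
    (a b : ℕ) (hb : 0 < b) (hab : Nat.Coprime a b)
    (h1 : (1 : ℚ) / 2 < (a : ℚ) / b) (h2 : (a : ℚ) / b < 1)
    (k : ℕ) (hk : 1 ≤ k) (ms : ℕ → ℕ)
    (L : List ℤ)
    (hL : L = (blocksOf (word01 ((1 : ℚ) / 2) 2) (word01 (1 : ℚ) 1) 1 ms k).flatten)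
    (hdig : ∀ j : ℕ, 1 ≤ j →
      gammaBL ((1 : ℚ) / 2) ((a : ℚ) / b) 2 j = L.getD ((j - 1) % L.length) 0) :
    (∀ m : ℕ,
      Blk (word01 ((1 : ℚ) / 2) 2) (word01 (1 : ℚ) 1) 1 m = 0 :: List.replicate (m + 1) 1 ∧
      wordSucc (Blk (word01 ((1 : ℚ) / 2) 2) (word01 (1 : ℚ) 1) 1 m) =
        1 :: List.replicate (m + 1) 0) ∧
    periodicTheta ((blocksOf' (word01 ((1 : ℚ) / 2) 2) (word01 (1 : ℚ) 1) 1 ms k).flatten) =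
      theta10BL ((1 : ℚ) / 2) (1 - (a : ℚ) / b) 2 :=
  conjugate_angle_half_limb_symmetry_general a b k hk ms L hL hdig
end
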